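/- arXiv:2302.02863 — 5 statements merged into one kernel-verified Lean document; each statement's English description precedes it below -/
import Mathlib

section
/- Let Ω ⊂ ℝ^d be bounded and measurable, let Ω_i ⊂ Ω be measurable with |Ω \ Ω_i| > 0 (Lebesgue measure), and let γ : Ω × Ω → [0,∞] be measurable with γ(x,y) ≥ δ |x - y|^{-(d + s(x) + s(y))} for a.e. x, y ∈ Ω, where δ > 0 and s : ℝ^d → [s̲, s̄] ⊂ (0,1) is measurable. Then there exists a constant C > 0, depending only on Ω, Ω_i, δ, d, s̄, such that for every v ∈ L²(Ω) with v = 0 a.e. on Ω \ Ω_i one has the nonlocal Poincaré inequality ‖v‖²_{L²(Ω)} ≤ C ∫_Ω ∫_Ω (v(x) - v(y))² γ(x,y) dy dx. -/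
/-!
On a bounded `Ω` with `dist x y ≤ R` and `R ≥ 1`, the kernel `δ ‖x - y‖^(-(d + s x + s y))` is
bounded below by the constant `κ = δ R^(-(d + 2 s̄))`. Restricting the inner integral of the
double integral to `y ∈ Ω \ Ωi`, where `v y = 0`, leaves `κ |Ω \ Ωi| ∫_Ω v²`, so
`C = (κ |Ω \ Ωi|)⁻¹` works.
-/

open MeasureTheory ENNReal

theorem Real.rpow_neg_le_rpow_neg_of_le {t R α β : ℝ} (ht : 0 < t) (htR : t ≤ R) (hR : 1 ≤ R)
    (hα : 0 ≤ α) (hαβ : α ≤ β) : R ^ (-β) ≤ t ^ (-α) :=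
  calc R ^ (-β) ≤ R ^ (-α) := Real.rpow_le_rpow_of_exponent_le hR (neg_le_neg hαβ)
    _ ≤ t ^ (-α) := Real.rpow_le_rpow_of_nonpos ht htR (neg_nonpos.mpr hα)

section

variable {X : Type*} [MeasurableSpace X] {μ : Measure X}

theorem measure_mul_setLIntegral_sq_le {Ω E : Set X} (hE : E ⊆ Ω) {v : X → ℝ}
    (hv : ∀ᵐ y ∂μ.restrict E, v y = 0) :
    μ E * ∫⁻ x in Ω, ENNReal.ofReal (v x ^ 2) ∂μ ≤
      ∫⁻ x in Ω, ∫⁻ y in Ω, ENNReal.ofReal ((v x - v y) ^ 2) ∂μ ∂μ := by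
  have inner_eq (x : X) :
      ∫⁻ y in E, ENNReal.ofReal ((v x - v y) ^ 2) ∂μ = μ E * ENNReal.ofReal (v x ^ 2) := by
    rw [mul_comm, ← setLIntegral_const]
    refine lintegral_congr_ae ?_
    filter_upwards [hv] with y hy
    rw [hy, sub_zero]
  calc μ E * ∫⁻ x in Ω, ENNReal.ofReal (v x ^ 2) ∂μ
      ≤ ∫⁻ x in Ω, μ E * ENNReal.ofReal (v x ^ 2) ∂μ := lintegral_const_mul_le _ _
    _ = ∫⁻ x in Ω, ∫⁻ y in E, ENNReal.ofReal ((v x - v y) ^ 2) ∂μ ∂μ := by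
      simp only [inner_eq]
    _ ≤ _ := lintegral_mono fun x => lintegral_mono_set hE

theorem const_mul_lintegral_lintegral_le [SFinite μ] {F γ : X → X → ℝ≥0∞} {κ : ℝ≥0∞}
    (hF : ∀ x, F x x = 0) (hγ : ∀ᵐ p ∂μ.prod μ, p.1 ≠ p.2 → κ ≤ γ p.1 p.2) :
    κ * ∫⁻ x, ∫⁻ y, F x y ∂μ ∂μ ≤ ∫⁻ x, ∫⁻ y, F x y * γ x y ∂μ ∂μ := by
  refine (lintegral_const_mul_le _ _).trans (lintegral_mono_ae ?_)
  filter_upwards [Measure.ae_ae_of_ae_prod hγ] with x hx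
  refine (lintegral_const_mul_le _ _).trans (lintegral_mono_ae ?_)
  filter_upwards [hx] with y hκ
  obtain rfl | hxy := eq_or_ne x y
  · simp [hF]
  · rw [mul_comm]
    exact mul_le_mul_right (hκ hxy) _

end

theorem ae_const_le_of_fractional_kernel_le {E : Type*} [NormedAddCommGroup E] [MeasurableSpace E]
    {μ : Measure E} [SFinite μ] {Ω : Set E} (hΩ : MeasurableSet Ω) {R : ℝ} (hR1 : 1 ≤ R)
    (hR : ∀ x ∈ Ω, ∀ y ∈ Ω, dist x y ≤ R) {d δ σ : ℝ} (hd : 0 ≤ d) (hδ : 0 ≤ δ) {s : E → ℝ}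
    (hs : ∀ x, 0 ≤ s x ∧ s x ≤ σ) {γ : E → E → ℝ≥0∞}
    (hγ : ∀ᵐ p ∂(μ.restrict Ω).prod (μ.restrict Ω),
      ENNReal.ofReal (δ * ‖p.1 - p.2‖ ^ (-(d + s p.1 + s p.2))) ≤ γ p.1 p.2) :
    ∀ᵐ p ∂(μ.restrict Ω).prod (μ.restrict Ω),
      p.1 ≠ p.2 → ENNReal.ofReal (δ * R ^ (-(d + 2 * σ))) ≤ γ p.1 p.2 := by
  have hmem : ∀ᵐ p ∂(μ.restrict Ω).prod (μ.restrict Ω), p ∈ Ω ×ˢ Ω := by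
    rw [Measure.prod_restrict]
    exact ae_restrict_mem (hΩ.prod hΩ)
  filter_upwards [hγ, hmem] with ⟨x, y⟩ hγxy ⟨hx, hy⟩ hxy
  refine le_trans (ENNReal.ofReal_le_ofReal (mul_le_mul_of_nonneg_left ?_ hδ)) hγxy
  refine Real.rpow_neg_le_rpow_neg_of_le (norm_pos_iff.mpr (sub_ne_zero.mpr hxy))
    ((dist_eq_norm x y).symm.le.trans (hR x hx y hy)) hR1 ?_ ?_
  · linarith [(hs x).1, (hs y).1]
  · linarith [(hs x).2, (hs y).2]

theorem nonlocal_poincare_inequality_general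
    (d : ℕ)
    (Ω Ωi : Set (EuclideanSpace ℝ (Fin d)))
    (hΩm : MeasurableSet Ω) (hΩb : Bornology.IsBounded Ω)
    (hpos : 0 < volume (Ω \ Ωi))
    (δ : ℝ) (hδ : 0 < δ)
    (slo shi : ℝ) (h0 : 0 < slo) :
    ∃ C : ℝ, 0 < C ∧
      ∀ s : EuclideanSpace ℝ (Fin d) → ℝ, Measurable s →
        (∀ x, slo ≤ s x ∧ s x ≤ shi) →
      ∀ γ : EuclideanSpace ℝ (Fin d) → EuclideanSpace ℝ (Fin d) → ℝ≥0∞,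
        Measurable (Function.uncurry γ) →
        (∀ᵐ p : EuclideanSpace ℝ (Fin d) × EuclideanSpace ℝ (Fin d)
            ∂((volume.restrict Ω).prod (volume.restrict Ω)),
          ENNReal.ofReal (δ * ‖p.1 - p.2‖ ^ (-((d : ℝ) + s p.1 + s p.2))) ≤ γ p.1 p.2) →
      ∀ v : EuclideanSpace ℝ (Fin d) → ℝ,
        MemLp v 2 (volume.restrict Ω) →
        (∀ᵐ x ∂(volume.restrict (Ω \ Ωi)), v x = 0) →
        ENNReal.ofReal (∫ x in Ω, (v x) ^ 2)
          ≤ ENNReal.ofReal C *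
            ∫⁻ x in Ω, ∫⁻ y in Ω, ENNReal.ofReal ((v x - v y) ^ 2) * γ x y := by
  obtain ⟨R, hR⟩ := Metric.isBounded_iff.mp hΩb
  set m := volume (Ω \ Ωi)
  set κ := ENNReal.ofReal (δ * max R 1 ^ (-((d : ℝ) + 2 * shi)))
  have hκ : κ ≠ 0 :=
    (ENNReal.ofReal_pos.mpr (mul_pos hδ (Real.rpow_pos_of_pos (by positivity) _))).ne'
  have hm : m ≠ ∞ := ((measure_mono Set.sdiff_subset).trans_lt hΩb.measure_lt_top).ne
  have hmκ_ne_zero : m * κ ≠ 0 := mul_ne_zero hpos.ne' hκ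
  have hmκ_ne_top : m * κ ≠ ∞ := mul_ne_top hm ofReal_ne_top
  refine ⟨(m * κ)⁻¹.toReal,
    toReal_pos (ENNReal.inv_ne_zero.mpr hmκ_ne_top) (inv_ne_top.mpr hmκ_ne_zero), ?_⟩
  intro s _ hs γ _ hγ v hv hv0
  rw [ofReal_toReal (inv_ne_top.mpr hmκ_ne_zero),
    ← ENNReal.mul_le_iff_le_inv hmκ_ne_zero hmκ_ne_top,
    ofReal_integral_eq_lintegral_ofReal hv.integrable_sq (ae_of_all _ fun x => sq_nonneg _)]
  have hκγ := ae_const_le_of_fractional_kernel_le hΩm (le_max_right R 1)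
    (fun x hx y hy => (hR hx hy).trans (le_max_left R 1)) (Nat.cast_nonneg d) hδ.le
    (fun x => ⟨h0.le.trans (hs x).1, (hs x).2⟩) hγ
  calc m * κ * ∫⁻ x in Ω, ENNReal.ofReal (v x ^ 2)
      = κ * (m * ∫⁻ x in Ω, ENNReal.ofReal (v x ^ 2)) := by ring
    _ ≤ κ * ∫⁻ x in Ω, ∫⁻ y in Ω, ENNReal.ofReal ((v x - v y) ^ 2) :=
      mul_le_mul_right (measure_mul_setLIntegral_sq_le Set.sdiff_subset hv0) _
    _ ≤ _ := const_mul_lintegral_lintegral_le (fun x => by simp) hκγ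

/-- Nonlocal Poincaré inequality for the variable-order fractional kernel:
there is a constant `C`, depending only on `Ω`, `Ωi`, `δ`, `d`, `shi`, such that
`‖v‖²_{L²(Ω)} ≤ C ∫_Ω ∫_Ω (v(x)-v(y))² γ(x,y) dy dx` for all `v ∈ L²(Ω)` vanishing
a.e. outside `Ωi`. -/
theorem nonlocal_poincare_inequality
    (d : ℕ) (hd : 1 ≤ d)
    (Ω Ωi : Set (EuclideanSpace ℝ (Fin d)))
    (hΩm : MeasurableSet Ω) (hΩb : Bornology.IsBounded Ω)
    (hΩim : MeasurableSet Ωi) (hsub : Ωi ⊆ Ω)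
    (hpos : 0 < volume (Ω \ Ωi))
    (δ : ℝ) (hδ : 0 < δ)
    (slo shi : ℝ) (h0 : 0 < slo) (hss : slo ≤ shi) (h1 : shi < 1) :
    ∃ C : ℝ, 0 < C ∧
      ∀ s : EuclideanSpace ℝ (Fin d) → ℝ, Measurable s →
        (∀ x, slo ≤ s x ∧ s x ≤ shi) →
      ∀ γ : EuclideanSpace ℝ (Fin d) → EuclideanSpace ℝ (Fin d) → ℝ≥0∞,
        Measurable (Function.uncurry γ) →
        (∀ᵐ p : EuclideanSpace ℝ (Fin d) × EuclideanSpace ℝ (Fin d)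
            ∂((volume.restrict Ω).prod (volume.restrict Ω)),
          ENNReal.ofReal (δ * ‖p.1 - p.2‖ ^ (-((d : ℝ) + s p.1 + s p.2))) ≤ γ p.1 p.2) →
      ∀ v : EuclideanSpace ℝ (Fin d) → ℝ,
        MemLp v 2 (volume.restrict Ω) →
        (∀ᵐ x ∂(volume.restrict (Ω \ Ωi)), v x = 0) →
        ENNReal.ofReal (∫ x in Ω, (v x) ^ 2)
          ≤ ENNReal.ofReal C *
            ∫⁻ x in Ω, ∫⁻ y in Ω, ENNReal.ofReal ((v x - v y) ^ 2) * γ x y :=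
  nonlocal_poincare_inequality_general d Ω Ωi hΩm hΩb hpos δ hδ slo shi h0
end

section
/- Let Ω ⊂ ℝ^d be bounded and measurable, Ω_i ⊂ Ω measurable with |Ω \ Ω_i| > 0, and let γ : Ω × Ω → [0,∞] be measurable, symmetric, with γ(x,y) ≥ δ |x-y|^{-(d+s(x)+s(y))} for some δ > 0 and measurable s : ℝ^d → [s̲, s̄] ⊂ (0,1). Let A(u,v) := ∫_Ω ∫_Ω (u(x) - u(y))(v(x) - v(y)) γ(x,y) dy dx and V := { v ∈ L²(Ω) : v = 0 a.e. on Ω \ Ω_i, |v|_V < ∞ } with ‖v‖²_V = ‖v‖²_{L²(Ω)} + |v|²_V. Then: (i) |A(u,v)| ≤ |u|_V |v|_V ≤ ‖u‖_V ‖v‖_V for all u, v ∈ V (boundedness), and (ii) there exists c > 0 such that A(v,v) ≥ c ‖v‖²_V for all v ∈ V (coercivity). -/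
/-!
Writing `A(u, v) = ∫_{Ω×Ω} U V` with `U(x, y) = (u x - u y) √γ(x, y)` turns boundedness into the
Cauchy–Schwarz inequality in `L²(Ω × Ω)`. For coercivity, boundedness of `Ω` and the lower bound on
`γ` give `γ ≥ c > 0` off the diagonal of `Ω × Ω`. Since `v` vanishes on `Ω \ Ωi`, restricting the
seminorm integral to `y ∈ Ω \ Ωi` yields the Poincaré inequality `κ ‖v‖²_{L²} ≤ |v|²_V` with
`κ = c |Ω \ Ωi|`, hence `A(v, v) = |v|²_V ≥ κ / (1 + κ) ‖v‖²_V`.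
-/

open MeasureTheory

/-- The energy seminorm squared `|v|²_V = ∫_Ω ∫_Ω (v(x)-v(y))² γ(x,y) dy dx`. -/
noncomputable def seminormVSq {d : ℕ} (Ω : Set (EuclideanSpace ℝ (Fin d)))
    (γ : EuclideanSpace ℝ (Fin d) → EuclideanSpace ℝ (Fin d) → ℝ)
    (v : EuclideanSpace ℝ (Fin d) → ℝ) : ℝ :=
  ∫ x in Ω, ∫ y in Ω, (v x - v y) ^ 2 * γ x y

/-- The energy norm squared `‖v‖²_V = ‖v‖²_{L²(Ω)} + |v|²_V`. -/
noncomputable def normVSq {d : ℕ} (Ω : Set (EuclideanSpace ℝ (Fin d)))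
    (γ : EuclideanSpace ℝ (Fin d) → EuclideanSpace ℝ (Fin d) → ℝ)
    (v : EuclideanSpace ℝ (Fin d) → ℝ) : ℝ :=
  (∫ x in Ω, (v x) ^ 2) + seminormVSq Ω γ v

/-- The bilinear form `A(u,v) = ∫_Ω ∫_Ω (u(x)-u(y))(v(x)-v(y)) γ(x,y) dy dx`. -/
noncomputable def bilinA {d : ℕ} (Ω : Set (EuclideanSpace ℝ (Fin d)))
    (γ : EuclideanSpace ℝ (Fin d) → EuclideanSpace ℝ (Fin d) → ℝ)
    (u v : EuclideanSpace ℝ (Fin d) → ℝ) : ℝ :=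
  ∫ x in Ω, ∫ y in Ω, (u x - u y) * (v x - v y) * γ x y

/-- Membership in the energy space
`V = {v ∈ L²(Ω) : v = 0 a.e. on Ω \ Ωi, |v|_V < ∞}`. -/
def memV {d : ℕ} (Ω Ωi : Set (EuclideanSpace ℝ (Fin d)))
    (γ : EuclideanSpace ℝ (Fin d) → EuclideanSpace ℝ (Fin d) → ℝ)
    (v : EuclideanSpace ℝ (Fin d) → ℝ) : Prop :=
  MemLp v 2 (volume.restrict Ω) ∧
    (∀ᵐ x ∂(volume.restrict (Ω \ Ωi)), v x = 0) ∧
    IntegrableOn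
      (fun p : EuclideanSpace ℝ (Fin d) × EuclideanSpace ℝ (Fin d) =>
        (v p.1 - v p.2) ^ 2 * γ p.1 p.2) (Ω ×ˢ Ω)

section CauchySchwarz

variable {β : Type*} [MeasurableSpace β] {ν : Measure β}

theorem abs_integral_mul_le_sqrt_integral_sq_mul_sqrt_integral_sq {f g : β → ℝ}
    (hf : MemLp f 2 ν) (hg : MemLp g 2 ν) :
    |∫ x, f x * g x ∂ν| ≤ √(∫ x, f x ^ 2 ∂ν) * √(∫ x, g x ^ 2 ∂ν) := by
  have hnorm_rpow : ∀ h : β → ℝ, (fun x => ‖h x‖ ^ (2 : ℝ)) = fun x => h x ^ 2 := fun h => by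
    funext x
    rw [Real.rpow_two, Real.norm_eq_abs, sq_abs]
  calc |∫ x, f x * g x ∂ν| ≤ ∫ x, ‖f x‖ * ‖g x‖ ∂ν := by
        simpa only [Real.norm_eq_abs, norm_mul] using
          norm_integral_le_integral_norm (f := fun x => f x * g x)
    _ ≤ (∫ x, ‖f x‖ ^ (2 : ℝ) ∂ν) ^ (1 / 2 : ℝ) * (∫ x, ‖g x‖ ^ (2 : ℝ) ∂ν) ^ (1 / 2 : ℝ) :=
        integral_mul_norm_le_Lp_mul_Lq Real.HolderConjugate.two_two
          (by rwa [ENNReal.ofReal_ofNat]) (by rwa [ENNReal.ofReal_ofNat])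
    _ = √(∫ x, f x ^ 2 ∂ν) * √(∫ x, g x ^ 2 ∂ν) := by
        rw [hnorm_rpow f, hnorm_rpow g, Real.sqrt_eq_rpow, Real.sqrt_eq_rpow]

end CauchySchwarz

section EnergyForm

variable {α : Type*} {γ : α → α → ℝ}

noncomputable def weightedDiff (γ : α → α → ℝ) (u : α → ℝ) (p : α × α) : ℝ :=
  (u p.1 - u p.2) * √(γ p.1 p.2)

theorem weightedDiff_mul_weightedDiff (hγ : ∀ x y, 0 ≤ γ x y) (u v : α → ℝ) (p : α × α) :
    weightedDiff γ u p * weightedDiff γ v p = (u p.1 - u p.2) * (v p.1 - v p.2) * γ p.1 p.2 := by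
  rw [weightedDiff, weightedDiff, mul_mul_mul_comm, Real.mul_self_sqrt (hγ _ _)]

theorem weightedDiff_sq (hγ : ∀ x y, 0 ≤ γ x y) (u : α → ℝ) (p : α × α) :
    weightedDiff γ u p ^ 2 = (u p.1 - u p.2) ^ 2 * γ p.1 p.2 := by
  rw [sq, weightedDiff_mul_weightedDiff hγ, sq]

variable [MeasurableSpace α] {μ : Measure α} [SFinite μ] {Ω : Set α}

theorem memLp_weightedDiff (hγm : Measurable (Function.uncurry γ)) (hγ : ∀ x y, 0 ≤ γ x y)
    {u : α → ℝ} (hu : AEStronglyMeasurable u (μ.restrict Ω))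
    (hint : IntegrableOn (fun p : α × α => (u p.1 - u p.2) ^ 2 * γ p.1 p.2) (Ω ×ˢ Ω) (μ.prod μ)) :
    MemLp (weightedDiff γ u) 2 ((μ.prod μ).restrict (Ω ×ˢ Ω)) := by
  have hmeas : AEStronglyMeasurable (weightedDiff γ u) ((μ.prod μ).restrict (Ω ×ˢ Ω)) := by
    rw [← Measure.prod_restrict]
    exact (hu.comp_fst.sub hu.comp_snd).mul hγm.sqrt.aestronglyMeasurable
  refine (memLp_two_iff_integrable_sq hmeas).2 ?_
  simp only [weightedDiff_sq hγ]
  exact hint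

theorem abs_energyForm_le (hγm : Measurable (Function.uncurry γ)) (hγ : ∀ x y, 0 ≤ γ x y)
    {u v : α → ℝ} (hu : AEStronglyMeasurable u (μ.restrict Ω))
    (hv : AEStronglyMeasurable v (μ.restrict Ω))
    (hintu : IntegrableOn (fun p : α × α => (u p.1 - u p.2) ^ 2 * γ p.1 p.2) (Ω ×ˢ Ω) (μ.prod μ))
    (hintv : IntegrableOn (fun p : α × α => (v p.1 - v p.2) ^ 2 * γ p.1 p.2) (Ω ×ˢ Ω) (μ.prod μ)) :
    |∫ x in Ω, ∫ y in Ω, (u x - u y) * (v x - v y) * γ x y ∂μ ∂μ|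
      ≤ √(∫ x in Ω, ∫ y in Ω, (u x - u y) ^ 2 * γ x y ∂μ ∂μ)
        * √(∫ x in Ω, ∫ y in Ω, (v x - v y) ^ 2 * γ x y ∂μ ∂μ) := by
  have hU := memLp_weightedDiff hγm hγ hu hintu
  have hV := memLp_weightedDiff hγm hγ hv hintv
  have hUV : IntegrableOn (fun p : α × α => (u p.1 - u p.2) * (v p.1 - v p.2) * γ p.1 p.2)
      (Ω ×ˢ Ω) (μ.prod μ) :=
    (hU.integrable_mul hV).congr (.of_forall (weightedDiff_mul_weightedDiff hγ u v))
  rw [← setIntegral_prod _ hUV, ← setIntegral_prod _ hintu, ← setIntegral_prod _ hintv]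
  simpa only [weightedDiff_mul_weightedDiff hγ, weightedDiff_sq hγ] using
    abs_integral_mul_le_sqrt_integral_sq_mul_sqrt_integral_sq hU hV

end EnergyForm

theorem exists_pos_le_kernel_of_isBounded {E : Type*} [NormedAddCommGroup E] {Ω : Set E}
    (hΩ : Bornology.IsBounded Ω) {d : ℕ} {δ shi : ℝ} (hδ : 0 < δ) {s : E → ℝ}
    (hs_nonneg : ∀ x, 0 ≤ s x) (hs_le : ∀ x, s x ≤ shi) {γ : E → E → ℝ}
    (hγlb : ∀ x y, δ * ‖x - y‖ ^ (-((d : ℝ) + s x + s y)) ≤ γ x y) :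
    ∃ c > 0, ∀ x ∈ Ω, ∀ y ∈ Ω, x ≠ y → c ≤ γ x y := by
  set M := max 1 (Metric.diam Ω)
  have hM : 1 ≤ M := le_max_left _ _
  refine ⟨δ * M ^ (-((d : ℝ) + 2 * shi)), by positivity, fun x hx y hy hxy => ?_⟩
  have hdist : 0 < ‖x - y‖ := norm_pos_iff.2 (sub_ne_zero.2 hxy)
  have hdistM : ‖x - y‖ ≤ M :=
    (dist_eq_norm x y ▸ Metric.dist_le_diam_of_mem hΩ hx hy).trans (le_max_right _ _)
  calc δ * M ^ (-((d : ℝ) + 2 * shi)) ≤ δ * M ^ (-((d : ℝ) + s x + s y)) := by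
        refine mul_le_mul_of_nonneg_left (Real.rpow_le_rpow_of_exponent_le hM ?_) hδ.le
        linarith [hs_le x, hs_le y]
    _ ≤ δ * ‖x - y‖ ^ (-((d : ℝ) + s x + s y)) := by
        refine mul_le_mul_of_nonneg_left (Real.rpow_le_rpow_of_nonpos hdist hdistM ?_) hδ.le
        linarith [hs_nonneg x, hs_nonneg y, (d.cast_nonneg : (0 : ℝ) ≤ d)]
    _ ≤ γ x y := hγlb x y

section Poincare

variable {α : Type*} [MeasurableSpace α] {μ : Measure α} [SFinite μ] {Ω : Set α}
  {γ : α → α → ℝ}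

theorem mul_setIntegral_sq_le_energy (hΩ : MeasurableSet Ω) {Γ : Set α} (hΓ : Γ ⊆ Ω) {c : ℝ}
    (hc : 0 ≤ c) (hcγ : ∀ x ∈ Ω, ∀ y ∈ Ω, x ≠ y → c ≤ γ x y) {v : α → ℝ}
    (hv : ∀ᵐ y ∂μ.restrict Γ, v y = 0)
    (hint : IntegrableOn (fun p : α × α => (v p.1 - v p.2) ^ 2 * γ p.1 p.2) (Ω ×ˢ Ω) (μ.prod μ)) :
    c * μ.real Γ * ∫ x in Ω, v x ^ 2 ∂μ ≤ ∫ x in Ω, ∫ y in Ω, (v x - v y) ^ 2 * γ x y ∂μ ∂μ := by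
  have hpt : ∀ᵐ p ∂(μ.prod μ).restrict (Ω ×ˢ Ω),
      c * (v p.1 - v p.2) ^ 2 ≤ (v p.1 - v p.2) ^ 2 * γ p.1 p.2 := by
    filter_upwards [ae_restrict_mem (hΩ.prod hΩ)] with p ⟨hp₁, hp₂⟩
    rcases eq_or_ne p.1 p.2 with heq | hne
    · simp [heq]
    · rw [mul_comm]
      exact mul_le_mul_of_nonneg_left (hcγ _ hp₁ _ hp₂ hne) (sq_nonneg _)
  have hsub : Ω ×ˢ Γ ⊆ Ω ×ˢ Ω := Set.prod_mono subset_rfl hΓ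
  have hcollar : ∫ p in Ω ×ˢ Γ, c * (v p.1 - v p.2) ^ 2 ∂μ.prod μ
      = c * μ.real Γ * ∫ x in Ω, v x ^ 2 ∂μ := by
    rw [← Measure.prod_restrict]
    have hzero : ∀ᵐ p ∂(μ.restrict Ω).prod (μ.restrict Γ), v p.2 = 0 :=
      Measure.quasiMeasurePreserving_snd.ae hv
    rw [integral_congr_ae (g := fun p => c * v p.1 ^ 2)
        (hzero.mono fun p hp => by simp only [hp, sub_zero]),
      integral_const_mul, integral_fun_fst (fun x => v x ^ 2), measureReal_restrict_apply_univ,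
      smul_eq_mul, ← mul_assoc]
  calc c * μ.real Γ * ∫ x in Ω, v x ^ 2 ∂μ
      = ∫ p in Ω ×ˢ Γ, c * (v p.1 - v p.2) ^ 2 ∂μ.prod μ := hcollar.symm
    _ ≤ ∫ p in Ω ×ˢ Γ, (v p.1 - v p.2) ^ 2 * γ p.1 p.2 ∂μ.prod μ :=
        integral_mono_of_nonneg (.of_forall fun p => by positivity) (hint.mono_set hsub)
          (ae_restrict_of_ae_restrict_of_subset hsub hpt)
    _ ≤ ∫ p in Ω ×ˢ Ω, (v p.1 - v p.2) ^ 2 * γ p.1 p.2 ∂μ.prod μ :=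
        setIntegral_mono_set hint (hpt.mono fun p hp => (by positivity : (0 : ℝ) ≤ _).trans hp)
          (.of_forall hsub)
    _ = ∫ x in Ω, ∫ y in Ω, (v x - v y) ^ 2 * γ x y ∂μ ∂μ := setIntegral_prod _ hint

end Poincare

theorem bilinear_form_bounded_and_coercive_general
    (d : ℕ)
    (Ω Ωi : Set (EuclideanSpace ℝ (Fin d)))
    (hΩm : MeasurableSet Ω) (hΩb : Bornology.IsBounded Ω)
    (hpos : 0 < volume (Ω \ Ωi))
    (δ slo shi : ℝ) (hδ : 0 < δ) (h0 : 0 < slo)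
    (s : EuclideanSpace ℝ (Fin d) → ℝ)
    (hsr : ∀ x, slo ≤ s x ∧ s x ≤ shi)
    (γ : EuclideanSpace ℝ (Fin d) → EuclideanSpace ℝ (Fin d) → ℝ)
    (hγm : Measurable (Function.uncurry γ))
    (hγlb : ∀ x y, δ * ‖x - y‖ ^ (-((d : ℝ) + s x + s y)) ≤ γ x y) :
    (∀ u v : EuclideanSpace ℝ (Fin d) → ℝ, memV Ω Ωi γ u → memV Ω Ωi γ v →
      |bilinA Ω γ u v| ≤ Real.sqrt (seminormVSq Ω γ u) * Real.sqrt (seminormVSq Ω γ v) ∧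
      Real.sqrt (seminormVSq Ω γ u) * Real.sqrt (seminormVSq Ω γ v)
        ≤ Real.sqrt (normVSq Ω γ u) * Real.sqrt (normVSq Ω γ v)) ∧
    (∃ c : ℝ, 0 < c ∧ ∀ v : EuclideanSpace ℝ (Fin d) → ℝ, memV Ω Ωi γ v →
      c * normVSq Ω γ v ≤ bilinA Ω γ v v) := by
  have hγ : ∀ x y, 0 ≤ γ x y := fun x y => (by positivity : 0 ≤ δ * _).trans (hγlb x y)
  have hsemi_le : ∀ w, seminormVSq Ω γ w ≤ normVSq Ω γ w := fun w =>
    le_add_of_nonneg_left (integral_nonneg fun x => sq_nonneg _)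
  refine ⟨fun u v hu hv => ⟨abs_energyForm_le hγm hγ hu.1.1 hv.1.1 hu.2.2 hv.2.2,
    mul_le_mul (Real.sqrt_le_sqrt (hsemi_le u)) (Real.sqrt_le_sqrt (hsemi_le v))
      (Real.sqrt_nonneg _) (Real.sqrt_nonneg _)⟩, ?_⟩
  obtain ⟨c, hc, hcγ⟩ := exists_pos_le_kernel_of_isBounded hΩb hδ
    (fun x => h0.le.trans (hsr x).1) (fun x => (hsr x).2) hγlb
  have hm : 0 < volume.real (Ω \ Ωi) :=
    ENNReal.toReal_pos hpos.ne' ((measure_mono Set.sdiff_subset).trans_lt hΩb.measure_lt_top).ne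
  set κ := c * volume.real (Ω \ Ωi)
  have hκ : 0 < κ := mul_pos hc hm
  refine ⟨κ / (1 + κ), by positivity, fun v hv => ?_⟩
  have hpoincare : κ * ∫ x in Ω, v x ^ 2 ≤ seminormVSq Ω γ v :=
    mul_setIntegral_sq_le_energy hΩm Set.sdiff_subset hc.le hcγ hv.2.1 hv.2.2
  have hA : bilinA Ω γ v v = seminormVSq Ω γ v := by simp only [bilinA, seminormVSq, ← sq]
  rw [hA, normVSq, div_mul_eq_mul_div, div_le_iff₀ (by positivity)]
  linarith

/-- Boundedness `|A(u,v)| ≤ |u|_V |v|_V ≤ ‖u‖_V ‖v‖_V` and coercivity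
`A(v,v) ≥ c ‖v‖²_V` of the variable-order fractional bilinear form on `V`. -/
theorem bilinear_form_bounded_and_coercive
    (d : ℕ) (hd : 1 ≤ d)
    (Ω Ωi : Set (EuclideanSpace ℝ (Fin d)))
    (hΩm : MeasurableSet Ω) (hΩb : Bornology.IsBounded Ω)
    (hΩim : MeasurableSet Ωi) (hsub : Ωi ⊆ Ω)
    (hpos : 0 < volume (Ω \ Ωi))
    (δ slo shi : ℝ) (hδ : 0 < δ) (h0 : 0 < slo) (hss : slo ≤ shi) (h1 : shi < 1)
    (s : EuclideanSpace ℝ (Fin d) → ℝ) (hs : Measurable s)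
    (hsr : ∀ x, slo ≤ s x ∧ s x ≤ shi)
    (γ : EuclideanSpace ℝ (Fin d) → EuclideanSpace ℝ (Fin d) → ℝ)
    (hγm : Measurable (Function.uncurry γ))
    (hγsym : ∀ x y, γ x y = γ y x)
    (hγlb : ∀ x y, δ * ‖x - y‖ ^ (-((d : ℝ) + s x + s y)) ≤ γ x y) :
    (∀ u v : EuclideanSpace ℝ (Fin d) → ℝ, memV Ω Ωi γ u → memV Ω Ωi γ v →
      |bilinA Ω γ u v| ≤ Real.sqrt (seminormVSq Ω γ u) * Real.sqrt (seminormVSq Ω γ v) ∧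
      Real.sqrt (seminormVSq Ω γ u) * Real.sqrt (seminormVSq Ω γ v)
        ≤ Real.sqrt (normVSq Ω γ u) * Real.sqrt (normVSq Ω γ v)) ∧
    (∃ c : ℝ, 0 < c ∧ ∀ v : EuclideanSpace ℝ (Fin d) → ℝ, memV Ω Ωi γ v →
      c * normVSq Ω γ v ≤ bilinA Ω γ v v) :=
  bilinear_form_bounded_and_coercive_general d Ω Ωi hΩm hΩb hpos δ slo shi hδ h0 s hsr γ hγm hγlb
end

section
/- Let τ̂ := { (x₁,x₂) ∈ ℝ² : 0 ≤ x₂ ≤ x₁ ≤ 1 } be the reference triangle. Define the maps T_V^{(1)}, T_V^{(2)} : (0,1)⁴ → τ̂ × τ̂ by T_V^{(1)}(ξ,η₁,η₂,η₃) = ((ξ, ξη₁), (ξη₂, ξη₂η₃)) and T_V^{(2)}(ξ,η₁,η₂,η₃) = ((ξη₂, ξη₂η₃), (ξ, ξη₁)). Then for every integrable function f on τ̂ × τ̂ ⊂ ℝ⁴ one has ∫_{τ̂ × τ̂} f(x̂, ŷ) d(x̂, ŷ) = Σ_{k=1}^{2} ∫_{(0,1)⁴} f(T_V^{(k)}(ξ,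 η₁, η₂, η₃)) · ξ³ η₂ dξ dη₁ dη₂ dη₃; in particular each T_V^{(k)} is injective up to a null set with Jacobian determinant of absolute value ξ³η₂, and the images of T_V^{(1)} and T_V^{(2)} cover τ̂ × τ̂ up to a Lebesgue null set, overlapping only on a null set. -/
open MeasureTheory

/-- The reference triangle with vertices `(0,0)`, `(1,0)`, `(1,1)`. -/
def refTriangle : Set (ℝ × ℝ) := {p | 0 ≤ p.2 ∧ p.2 ≤ p.1 ∧ p.1 ≤ 1}

/-- The open unit 4-cube `(0,1)⁴`. -/
def unitCube4 : Set (ℝ × ℝ × ℝ × ℝ) :=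
  Set.Ioo 0 1 ×ˢ Set.Ioo 0 1 ×ˢ Set.Ioo 0 1 ×ˢ Set.Ioo 0 1

/-- Duffy-type map `T_V^{(1)}(ξ,η₁,η₂,η₃) = ((ξ, ξη₁), (ξη₂, ξη₂η₃))` for the
vertex-sharing case. -/
def TV1 : ℝ × ℝ × ℝ × ℝ → (ℝ × ℝ) × (ℝ × ℝ) :=
  fun q => ((q.1, q.1 * q.2.1), (q.1 * q.2.2.1, q.1 * q.2.2.1 * q.2.2.2))

/-- Duffy-type map `T_V^{(2)}(ξ,η₁,η₂,η₃) = ((ξη₂, ξη₂η₃), (ξ, ξη₁))` for the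
vertex-sharing case. -/
def TV2 : ℝ × ℝ × ℝ × ℝ → (ℝ × ℝ) × (ℝ × ℝ) :=
  fun q => ((q.1 * q.2.2.1, q.1 * q.2.2.1 * q.2.2.2), (q.1, q.1 * q.2.1))

namespace DuffyAux

open ContinuousLinearMap

noncomputable section

abbrev E4 := (ℝ × ℝ) × (ℝ × ℝ)

def l1 : E4 →L[ℝ] ℝ := (fst ℝ ℝ ℝ).comp (fst ℝ (ℝ×ℝ) (ℝ×ℝ))
def l2 : E4 →L[ℝ] ℝ := (snd ℝ ℝ ℝ).comp (fst ℝ (ℝ×ℝ) (ℝ×ℝ))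
def l3 : E4 →L[ℝ] ℝ := (fst ℝ ℝ ℝ).comp (snd ℝ (ℝ×ℝ) (ℝ×ℝ))
def l4 : E4 →L[ℝ] ℝ := (snd ℝ ℝ ℝ).comp (snd ℝ (ℝ×ℝ) (ℝ×ℝ))

def D1 (p : E4) : E4 →L[ℝ] E4 :=
  (l1.prod (p.1.1 • l2 + p.1.2 • l1)).prod
    ((p.1.1 • l3 + p.2.1 • l1).prod
      ((p.1.1 * p.2.1) • l4 + p.2.2 • (p.1.1 • l3 + p.2.1 • l1)))

def g1 : E4 → E4 := fun p => ((p.1.1, p.1.1 * p.1.2), (p.1.1 * p.2.1, p.1.1 * p.2.1 * p.2.2))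

theorem hD1 (p : E4) : HasFDerivAt g1 (D1 p) p := by
  have h1 : HasFDerivAt (fun p : E4 => p.1.1) l1 p := l1.hasFDerivAt
  have h2 : HasFDerivAt (fun p : E4 => p.1.2) l2 p := l2.hasFDerivAt
  have h3 : HasFDerivAt (fun p : E4 => p.2.1) l3 p := l3.hasFDerivAt
  have h4 : HasFDerivAt (fun p : E4 => p.2.2) l4 p := l4.hasFDerivAt
  exact (h1.prodMk (h1.mul h2)).prodMk ((h1.mul h3).prodMk ((h1.mul h3).mul h4))

instance : (volume : Measure (ℝ × ℝ)).IsAddHaarMeasure :=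
  inferInstanceAs (((volume : Measure ℝ).prod volume).IsAddHaarMeasure)

instance : (volume : Measure E4).IsAddHaarMeasure :=
  inferInstanceAs (((volume : Measure (ℝ × ℝ)).prod volume).IsAddHaarMeasure)

def bE : Module.Basis (Fin 2 ⊕ Fin 2) ℝ E4 := (Module.Basis.finTwoProd ℝ).prod (Module.Basis.finTwoProd ℝ)

theorem detD1 (p : E4) : (D1 p).det = p.1.1 ^ 3 * p.2.1 := by
  have h0 : (D1 p).det = Matrix.det (LinearMap.toMatrix bE bE (D1 p)) := by
    rw [LinearMap.det_toMatrix]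
  rw [h0]
  have hM : LinearMap.toMatrix bE bE (D1 p)
      = Matrix.fromBlocks !![1,0; p.1.2,p.1.1] 0 !![p.2.1, 0; p.2.1*p.2.2, 0]
          !![p.1.1, 0; p.1.1*p.2.2, p.1.1*p.2.1] := by
    ext i j
    rcases i with i|i <;> rcases j with j|j <;> fin_cases i <;> fin_cases j <;>
      simp [bE, LinearMap.toMatrix_apply, Module.Basis.prod_apply, Module.Basis.prod_repr_inl,
        Module.Basis.prod_repr_inr, Module.Basis.coe_finTwoProd_repr, Module.Basis.finTwoProd_zero,
        Module.Basis.finTwoProd_one, D1, l1, l2, l3, l4, Matrix.fromBlocks, mul_comm]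
  rw [hM, Matrix.det_fromBlocks_zero₁₂, Matrix.det_fin_two_of, Matrix.det_fin_two_of]
  ring

/-- The image of `TV1` on the open cube. -/
def U1 : Set E4 :=
  {p | 0 < p.1.2 ∧ p.1.2 < p.1.1 ∧ p.1.1 < 1 ∧ 0 < p.2.2 ∧ p.2.2 < p.2.1 ∧ p.2.1 < p.1.1}

/-- The image of `TV2` on the open cube. -/
def U2 : Set E4 :=
  {p | 0 < p.2.2 ∧ p.2.2 < p.2.1 ∧ p.2.1 < 1 ∧ 0 < p.1.2 ∧ p.1.2 < p.1.1 ∧ p.1.1 < p.2.1}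

theorem mem_unitCube4 {q : ℝ × ℝ × ℝ × ℝ} :
    q ∈ unitCube4 ↔ (0 < q.1 ∧ q.1 < 1) ∧ (0 < q.2.1 ∧ q.2.1 < 1)
      ∧ (0 < q.2.2.1 ∧ q.2.2.1 < 1) ∧ (0 < q.2.2.2 ∧ q.2.2.2 < 1) := by
  simp [unitCube4, Set.mem_prod, Set.mem_Ioo, and_assoc]

theorem image_TV1 : TV1 '' unitCube4 = U1 := by
  ext p
  constructor
  · rintro ⟨q, hq, rfl⟩
    rw [mem_unitCube4] at hq
    obtain ⟨⟨h1, h2⟩, ⟨h3, h4⟩, ⟨h5, h6⟩, ⟨h7, h8⟩⟩ := hq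
    simp only [U1, TV1, Set.mem_setOf_eq]
    refine ⟨by positivity, by nlinarith [mul_pos h1 (sub_pos.mpr h4)], h2, by positivity,
      by nlinarith [mul_pos (mul_pos h1 h5) (sub_pos.mpr h8)],
      by nlinarith [mul_pos h1 (sub_pos.mpr h6)]⟩
  · rintro ⟨h1, h2, h3, h4, h5, h6⟩
    have hx1 : 0 < p.1.1 := lt_trans h1 h2
    have hy1 : 0 < p.2.1 := lt_trans h4 h5
    refine ⟨(p.1.1, p.1.2 / p.1.1, p.2.1 / p.1.1, p.2.2 / p.2.1), ?_, ?_⟩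
    · rw [mem_unitCube4]
      refine ⟨⟨hx1, h3⟩, ⟨by positivity, (div_lt_one hx1).2 h2⟩,
        ⟨by positivity, (div_lt_one hx1).2 h6⟩, ⟨by positivity, (div_lt_one hy1).2 h5⟩⟩
    · show ((p.1.1, p.1.1 * (p.1.2 / p.1.1)), (p.1.1 * (p.2.1 / p.1.1),
        p.1.1 * (p.2.1 / p.1.1) * (p.2.2 / p.2.1))) = p
      have e1 : p.1.1 * (p.1.2 / p.1.1) = p.1.2 := by field_simp
      have e2 : p.1.1 * (p.2.1 / p.1.1) = p.2.1 := by field_simp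
      have e3 : p.2.1 * (p.2.2 / p.2.1) = p.2.2 := by field_simp
      rw [e1, e2, e3]

theorem TV2_eq_swap_TV1 : ∀ q, TV2 q = Prod.swap (TV1 q) := fun _ => rfl

theorem U2_eq_preimage : U2 = Prod.swap ⁻¹' U1 := rfl

theorem image_TV2 : TV2 '' unitCube4 = U2 := by
  have : TV2 '' unitCube4 = Prod.swap '' (TV1 '' unitCube4) := by
    rw [Set.image_image]; exact Set.image_congr fun q _ => (TV2_eq_swap_TV1 q).symm |>.symm
  rw [this, image_TV1, Set.image_swap_eq_preimage_swap, U2_eq_preimage]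

theorem U1_subset : U1 ⊆ refTriangle ×ˢ refTriangle := by
  rintro p ⟨h1, h2, h3, h4, h5, h6⟩
  exact ⟨⟨h1.le, h2.le, h3.le⟩, ⟨h4.le, h5.le, (h6.trans h3).le⟩⟩

theorem U2_subset : U2 ⊆ refTriangle ×ˢ refTriangle := by
  rintro p ⟨h1, h2, h3, h4, h5, h6⟩
  exact ⟨⟨h4.le, h5.le, (h6.trans h3).le⟩, ⟨h1.le, h2.le, h3.le⟩⟩

theorem injOn_TV1 : Set.InjOn TV1 unitCube4 := by
  rintro ⟨a, b, c, d⟩ hq ⟨a', b', c', d'⟩ hq' h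
  rw [mem_unitCube4] at hq hq'
  simp only [TV1, Prod.mk.injEq] at h
  obtain ⟨⟨rfl, h2⟩, h3, h4⟩ := h
  have ha : a ≠ 0 := ne_of_gt hq.1.1
  have hb : b = b' := mul_left_cancel₀ ha h2
  have hc : c = c' := mul_left_cancel₀ ha h3
  subst hb; subst hc
  have hac : a * c ≠ 0 := by
    have := hq.2.2.1.1; positivity
  have hd : d = d' := mul_left_cancel₀ hac h4
  subst hd; rfl

theorem injOn_TV2 : Set.InjOn TV2 unitCube4 := by
  intro q hq q' hq' h
  exact injOn_TV1 hq hq' (Prod.swap_injective (by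
    rw [← TV2_eq_swap_TV1, ← TV2_eq_swap_TV1]; exact h))

theorem measurableSet_U1 : MeasurableSet U1 := by
  simp only [U1, Set.setOf_and]
  exact (measurableSet_lt measurable_const measurable_fst.snd).inter
    ((measurableSet_lt measurable_fst.snd measurable_fst.fst).inter
    ((measurableSet_lt measurable_fst.fst measurable_const).inter
    ((measurableSet_lt measurable_const measurable_snd.snd).inter
    ((measurableSet_lt measurable_snd.snd measurable_snd.fst).inter
    (measurableSet_lt measurable_snd.fst measurable_fst.fst)))))

theorem measurableSet_U2 : MeasurableSet U2 := by
  simp only [U2, Set.setOf_and]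
  exact (measurableSet_lt measurable_const measurable_snd.snd).inter
    ((measurableSet_lt measurable_snd.snd measurable_snd.fst).inter
    ((measurableSet_lt measurable_snd.fst measurable_const).inter
    ((measurableSet_lt measurable_const measurable_fst.snd).inter
    ((measurableSet_lt measurable_fst.snd measurable_fst.fst).inter
    (measurableSet_lt measurable_fst.fst measurable_snd.fst)))))

theorem U1_inter_U2 : U1 ∩ U2 = ∅ := by
  ext p
  simp only [Set.mem_inter_iff, U1, U2, Set.mem_setOf_eq, Set.mem_empty_iff_false, iff_false]
  rintro ⟨⟨_, _, _, _, _, h6⟩, ⟨_, _, _, _, _, h6'⟩⟩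
  exact absurd (h6.trans h6') (lt_irrefl _)

/-- A hyperplane `{L = c}` for a nonzero linear functional is Lebesgue-null. -/
theorem null_hyperplane (L : E4 →ₗ[ℝ] ℝ) (v : E4) (hv : L v ≠ 0) (c : ℝ) :
    volume {p : E4 | L p = c} = 0 := by
  set x₀ : E4 := (c / L v) • v with hx₀
  have hLx₀ : L x₀ = c := by
    rw [hx₀, L.map_smul, smul_eq_mul, div_mul_cancel₀ _ hv]
  set S : AffineSubspace ℝ E4 := AffineSubspace.mk' x₀ (LinearMap.ker L) with hS
  have hset : {p : E4 | L p = c} = (S : Set E4) := by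
    ext y
    rw [hS]
    simp only [Set.mem_setOf_eq, SetLike.mem_coe, AffineSubspace.mem_mk',
      vsub_eq_sub, LinearMap.mem_ker, map_sub, hLx₀, sub_eq_zero]
  have hStop : S ≠ ⊤ := by
    intro h
    have : x₀ + v ∈ S := h ▸ AffineSubspace.mem_top ℝ E4 _
    rw [hS, AffineSubspace.mem_mk', vsub_eq_sub, add_sub_cancel_left,
      LinearMap.mem_ker] at this
    exact hv this
  rw [hset]
  exact Measure.addHaar_affineSubspace volume S hStop

theorem null_complement :
    volume ((refTriangle ×ˢ refTriangle) \ (U1 ∪ U2)) = 0 := by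
  have z1 : volume {p : E4 | p.1.2 = 0} = 0 :=
    null_hyperplane l2.toLinearMap ((0,1),(0,0)) (by norm_num [l2]) 0
  have z2 : volume {p : E4 | p.1.2 = p.1.1} = 0 := by
    have := null_hyperplane (l1.toLinearMap - l2.toLinearMap) ((1,0),(0,0))
      (by norm_num [l1, l2]) 0
    refine measure_mono_null ?_ this
    intro p hp
    simp only [Set.mem_setOf_eq] at hp ⊢
    simp [l1, l2, hp]
  have z3 : volume {p : E4 | p.1.1 = 1} = 0 :=
    null_hyperplane l1.toLinearMap ((1,0),(0,0)) (by norm_num [l1]) 1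
  have z4 : volume {p : E4 | p.2.2 = 0} = 0 :=
    null_hyperplane l4.toLinearMap ((0,0),(0,1)) (by norm_num [l4]) 0
  have z5 : volume {p : E4 | p.2.2 = p.2.1} = 0 := by
    have := null_hyperplane (l3.toLinearMap - l4.toLinearMap) ((0,0),(1,0))
      (by norm_num [l3, l4]) 0
    refine measure_mono_null ?_ this
    intro p hp
    simp only [Set.mem_setOf_eq] at hp ⊢
    simp [l3, l4, hp]
  have z6 : volume {p : E4 | p.2.1 = 1} = 0 :=
    null_hyperplane l3.toLinearMap ((0,0),(1,0)) (by norm_num [l3]) 1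
  have z7 : volume {p : E4 | p.1.1 = p.2.1} = 0 := by
    have := null_hyperplane (l1.toLinearMap - l3.toLinearMap) ((1,0),(0,0))
      (by norm_num [l1, l3]) 0
    refine measure_mono_null ?_ this
    intro p hp
    simp only [Set.mem_setOf_eq] at hp ⊢
    simp [l1, l3, hp]
  refine measure_mono_null ?_ (measure_union_null z1 (measure_union_null z2
    (measure_union_null z3 (measure_union_null z4 (measure_union_null z5
    (measure_union_null z6 z7))))))
  rintro p ⟨⟨⟨hx0, hx1, hx2⟩, ⟨hy0, hy1, hy2⟩⟩, hp⟩
  simp only [Set.mem_union, Set.mem_setOf_eq]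
  by_contra hz
  push_neg at hz
  obtain ⟨e1, e2, e3, e4, e5, e6, e7⟩ := hz
  have hx0' : 0 < p.1.2 := lt_of_le_of_ne hx0 (Ne.symm e1)
  have hx1' : p.1.2 < p.1.1 := lt_of_le_of_ne hx1 e2
  have hx2' : p.1.1 < 1 := lt_of_le_of_ne hx2 e3
  have hy0' : 0 < p.2.2 := lt_of_le_of_ne hy0 (Ne.symm e4)
  have hy1' : p.2.2 < p.2.1 := lt_of_le_of_ne hy1 e5
  have hy2' : p.2.1 < 1 := lt_of_le_of_ne hy2 e6
  rcases lt_or_gt_of_ne e7 with h | h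
  · exact hp (Or.inr ⟨hy0', hy1', hy2', hx0', hx1', h⟩)
  · exact hp (Or.inl ⟨hx0', hx1', hx2', hy0', hy1', h⟩)

def sE : Set E4 := (Set.Ioo (0:ℝ) 1 ×ˢ Set.Ioo (0:ℝ) 1) ×ˢ (Set.Ioo (0:ℝ) 1 ×ˢ Set.Ioo (0:ℝ) 1)

theorem preimage_prodAssoc :
    (MeasurableEquiv.prodAssoc : E4 ≃ᵐ ℝ × ℝ × ℝ × ℝ) ⁻¹' unitCube4 = sE := by
  ext p
  simp [unitCube4, sE, MeasurableEquiv.prodAssoc, Equiv.prodAssoc, Set.mem_prod, and_assoc]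

theorem measurableSet_sE : MeasurableSet sE :=
  ((measurableSet_Ioo.prod measurableSet_Ioo).prod (measurableSet_Ioo.prod measurableSet_Ioo))

theorem image_g1 : g1 '' sE = TV1 '' unitCube4 := by
  have h1 : (MeasurableEquiv.prodAssoc : E4 ≃ᵐ ℝ × ℝ × ℝ × ℝ) '' sE = unitCube4 := by
    rw [← preimage_prodAssoc]
    exact Set.image_preimage_eq _ (MeasurableEquiv.prodAssoc).surjective
  rw [← h1, ← Set.image_comp]
  rfl

theorem injOn_g1 : Set.InjOn g1 sE := by
  intro p hp p' hp' h
  have hmem : ∀ {x : E4}, x ∈ sE →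
      (MeasurableEquiv.prodAssoc : E4 ≃ᵐ ℝ × ℝ × ℝ × ℝ) x ∈ unitCube4 := by
    intro x hx
    rw [← preimage_prodAssoc] at hx
    exact hx
  have := injOn_TV1 (hmem hp) (hmem hp') h
  exact (MeasurableEquiv.prodAssoc : E4 ≃ᵐ ℝ × ℝ × ℝ × ℝ).injective this

/-- The main change-of-variables identity for `TV1`. -/
theorem cov_TV1 (g : E4 → ℝ) :
    ∫ x in TV1 '' unitCube4, g x
      = ∫ q in unitCube4, g (TV1 q) * (q.1 ^ 3 * q.2.2.1) := by
  have hder : ∀ p ∈ sE, HasFDerivWithinAt g1 (D1 p) sE p :=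
    fun p _ => (hD1 p).hasFDerivWithinAt
  rw [← image_g1,
    integral_image_eq_integral_abs_det_fderiv_smul volume measurableSet_sE hder injOn_g1 g]
  set F : ℝ × ℝ × ℝ × ℝ → ℝ := fun q => g (TV1 q) * (q.1 ^ 3 * q.2.2.1) with hF
  have step : Set.EqOn (fun p => |(D1 p).det| • g (g1 p))
      (fun p => F ((MeasurableEquiv.prodAssoc : E4 ≃ᵐ ℝ × ℝ × ℝ × ℝ) p)) sE := by
    rintro ⟨⟨a, b⟩, ⟨c, d⟩⟩ ⟨⟨ha, hb⟩, ⟨hc, hd⟩⟩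
    have ha0 : (0:ℝ) < a := ha.1
    have hc0 : (0:ℝ) < c := hc.1
    have habs : |a ^ 3 * c| = a ^ 3 * c := abs_of_pos (by positivity)
    show |(D1 ((a,b),(c,d))).det| • g (g1 ((a,b),(c,d)))
      = g (TV1 (a,b,c,d)) * (a ^ 3 * c)
    rw [detD1]
    show |a ^ 3 * c| * g (g1 ((a,b),(c,d))) = g (TV1 (a,b,c,d)) * (a ^ 3 * c)
    rw [habs, mul_comm]
    rfl
  rw [setIntegral_congr_fun measurableSet_sE step, ← preimage_prodAssoc]
  exact MeasureTheory.volume_preserving_prodAssoc.setIntegral_preimage_emb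
    MeasurableEquiv.prodAssoc.measurableEmbedding F unitCube4

end

end DuffyAux

/-- Duffy-type decomposition of `τ̂ × τ̂` for the vertex-sharing case: the change of
variables formula with Jacobian `ξ³η₂`, the maps being injective with images covering
`τ̂ × τ̂` up to a null set and overlapping only on a null set. -/
theorem duffy_vertex_decomposition
    (f : (ℝ × ℝ) × (ℝ × ℝ) → ℝ)
    (hf : IntegrableOn f (refTriangle ×ˢ refTriangle)) :
    (∫ p in refTriangle ×ˢ refTriangle, f p
      = (∫ q in unitCube4, f (TV1 q) * (q.1 ^ 3 * q.2.2.1))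
        + ∫ q in unitCube4, f (TV2 q) * (q.1 ^ 3 * q.2.2.1)) ∧
    Set.MapsTo TV1 unitCube4 (refTriangle ×ˢ refTriangle) ∧
    Set.MapsTo TV2 unitCube4 (refTriangle ×ˢ refTriangle) ∧
    Set.InjOn TV1 unitCube4 ∧
    Set.InjOn TV2 unitCube4 ∧
    volume (TV1 '' unitCube4 ∩ TV2 '' unitCube4) = 0 ∧
    volume ((refTriangle ×ˢ refTriangle) \ (TV1 '' unitCube4 ∪ TV2 '' unitCube4)) = 0 := by
  classical
  obtain ⟨hU1img, hU2img⟩ := And.intro DuffyAux.image_TV1 DuffyAux.image_TV2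
  have hnull : volume ((refTriangle ×ˢ refTriangle) \ (TV1 '' unitCube4 ∪ TV2 '' unitCube4))
      = 0 := by
    rw [hU1img, hU2img]; exact DuffyAux.null_complement
  have hinter : volume (TV1 '' unitCube4 ∩ TV2 '' unitCube4) = 0 := by
    rw [hU1img, hU2img, DuffyAux.U1_inter_U2, measure_empty]
  refine ⟨?_, ?_, ?_, DuffyAux.injOn_TV1, DuffyAux.injOn_TV2, hinter, hnull⟩
  · -- the integral identity
    have hsub : DuffyAux.U1 ∪ DuffyAux.U2 ⊆ refTriangle ×ˢ refTriangle :=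
      Set.union_subset DuffyAux.U1_subset DuffyAux.U2_subset
    have haeeq : (DuffyAux.U1 ∪ DuffyAux.U2 : Set _) =ᵐ[volume] refTriangle ×ˢ refTriangle := by
      rw [MeasureTheory.ae_eq_set]
      constructor
      · rw [Set.diff_eq_empty.2 hsub, measure_empty]
      · rw [hU1img, hU2img] at hnull; exact hnull
    have hdisj : Disjoint DuffyAux.U1 DuffyAux.U2 :=
      Set.disjoint_iff_inter_eq_empty.2 DuffyAux.U1_inter_U2
    have hint1 : IntegrableOn f DuffyAux.U1 := hf.mono_set DuffyAux.U1_subset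
    have hint2 : IntegrableOn f DuffyAux.U2 := hf.mono_set DuffyAux.U2_subset
    have hswap : MeasurePreserving (Prod.swap : DuffyAux.E4 → DuffyAux.E4) volume volume :=
      Measure.measurePreserving_swap
    have hpre : Prod.swap ⁻¹' DuffyAux.U2 = DuffyAux.U1 := by
      rw [DuffyAux.U2_eq_preimage, ← Set.preimage_comp, Prod.swap_swap_eq, Set.preimage_id]
    have hU2int : ∫ x in DuffyAux.U2, f x
        = ∫ q in unitCube4, f (TV2 q) * (q.1 ^ 3 * q.2.2.1) := by
      have h1 : ∫ x in DuffyAux.U1, f (Prod.swap x) = ∫ x in DuffyAux.U2, f x := by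
        rw [← hpre]
        exact hswap.setIntegral_preimage_emb
          (MeasurableEquiv.prodComm : DuffyAux.E4 ≃ᵐ DuffyAux.E4).measurableEmbedding
          f DuffyAux.U2
      rw [← h1, ← hU1img]
      exact DuffyAux.cov_TV1 (fun x => f (Prod.swap x))
    have hU1int : ∫ x in DuffyAux.U1, f x
        = ∫ q in unitCube4, f (TV1 q) * (q.1 ^ 3 * q.2.2.1) := by
      rw [← hU1img]; exact DuffyAux.cov_TV1 f
    calc ∫ p in refTriangle ×ˢ refTriangle, f p
        = ∫ p in DuffyAux.U1 ∪ DuffyAux.U2, f p :=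
          (setIntegral_congr_set haeeq).symm
      _ = (∫ p in DuffyAux.U1, f p) + ∫ p in DuffyAux.U2, f p :=
          setIntegral_union hdisj DuffyAux.measurableSet_U2 hint1 hint2
      _ = _ := by rw [hU1int, hU2int]
  · rw [Set.mapsTo_iff_image_subset] ; rw [hU1img]; exact DuffyAux.U1_subset
  · rw [Set.mapsTo_iff_image_subset] ; rw [hU2img]; exact DuffyAux.U2_subset
end

section
/- Let τ̂ := { (x₁,x₂) ∈ ℝ² : 0 ≤ x₂ ≤ x₁ ≤ 1 } be the reference triangle. Define the five maps T_E^{(k)} : (0,1)⁴ → τ̂ × τ̂ by T_E^{(1)}(ξ,η) = ((ξ, ξη₁η₃), (ξ(1−η₁η₂), ξη₁(1−η₂))), T_E^{(2)}(ξ,η) = ((ξ, ξη₁), (ξ(1−η₁η₂η₃), ξη₁η₂(1−η₃))), T_E^{(3)}(ξ,η) = ((ξ(1−η₁η₂), ξη₁(1−η₂)), (ξ, ξη₁η₂η₃)), T_E^{(4)}(ξ,η) = ((ξ(1−η₁η₂η₃), ξη₁η₂(1−η₃)), (ξ, ξη₁)), T_E^{(5)}(ξ,η) = ((ξ(1−η₁η₂η₃),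 ξη₁(1−η₂η₃)), (ξ, ξη₁η₂)). Then for every integrable function f on τ̂ × τ̂ one has ∫_{τ̂ × τ̂} f(x̂, ŷ) d(x̂, ŷ) = Σ_{k=1}^{5} ∫_{(0,1)⁴} f(T_E^{(k)}(ξ,η)) · ξ³ J_E^{(k)}(η) dξ dη, where J_E^{(1)}(η) = η₁² and J_E^{(k)}(η) = η₁² η₂ for k = 2,3,4,5. -/
open MeasureTheory

/-- `T_E^{(1)}(ξ,η) = ((ξ, ξη₁η₃), (ξ(1−η₁η₂), ξη₁(1−η₂)))`. -/
def TE1 : ℝ × ℝ × ℝ × ℝ → (ℝ × ℝ) × (ℝ × ℝ) :=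
  fun ⟨ξ, η₁, η₂, η₃⟩ => ((ξ, ξ * η₁ * η₃), (ξ * (1 - η₁ * η₂), ξ * η₁ * (1 - η₂)))

/-- `T_E^{(2)}(ξ,η) = ((ξ, ξη₁), (ξ(1−η₁η₂η₃), ξη₁η₂(1−η₃)))`. -/
def TE2 : ℝ × ℝ × ℝ × ℝ → (ℝ × ℝ) × (ℝ × ℝ) :=
  fun ⟨ξ, η₁, η₂, η₃⟩ => ((ξ, ξ * η₁), (ξ * (1 - η₁ * η₂ * η₃), ξ * η₁ * η₂ * (1 - η₃)))

/-- `T_E^{(3)}(ξ,η) = ((ξ(1−η₁η₂), ξη₁(1−η₂)), (ξ, ξη₁η₂η₃))`. -/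
def TE3 : ℝ × ℝ × ℝ × ℝ → (ℝ × ℝ) × (ℝ × ℝ) :=
  fun ⟨ξ, η₁, η₂, η₃⟩ => ((ξ * (1 - η₁ * η₂), ξ * η₁ * (1 - η₂)), (ξ, ξ * η₁ * η₂ * η₃))

/-- `T_E^{(4)}(ξ,η) = ((ξ(1−η₁η₂η₃), ξη₁η₂(1−η₃)), (ξ, ξη₁))`. -/
def TE4 : ℝ × ℝ × ℝ × ℝ → (ℝ × ℝ) × (ℝ × ℝ) :=
  fun ⟨ξ, η₁, η₂, η₃⟩ => ((ξ * (1 - η₁ * η₂ * η₃), ξ * η₁ * η₂ * (1 - η₃)), (ξ, ξ * η₁))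

/-- `T_E^{(5)}(ξ,η) = ((ξ(1−η₁η₂η₃), ξη₁(1−η₂η₃)), (ξ, ξη₁η₂))`. -/
def TE5 : ℝ × ℝ × ℝ × ℝ → (ℝ × ℝ) × (ℝ × ℝ) :=
  fun ⟨ξ, η₁, η₂, η₃⟩ => ((ξ * (1 - η₁ * η₂ * η₃), ξ * η₁ * (1 - η₂ * η₃)), (ξ, ξ * η₁ * η₂))

noncomputable section SSAux

namespace SSAux

abbrev E4 : Type := ℝ × ℝ × ℝ × ℝ
abbrev F4 : Type := (ℝ × ℝ) × (ℝ × ℝ)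

instance : (volume : Measure (ℝ×ℝ)).IsAddHaarMeasure := by
  rw [Measure.volume_eq_prod]; infer_instance
instance : (volume : Measure (ℝ×ℝ×ℝ)).IsAddHaarMeasure := by
  rw [Measure.volume_eq_prod]; infer_instance
instance : (volume : Measure E4).IsAddHaarMeasure := by
  rw [Measure.volume_eq_prod]; infer_instance
instance : (volume : Measure F4).IsAddHaarMeasure := by
  rw [Measure.volume_eq_prod]; infer_instance

def flat4 : E4 ≃ₗ[ℝ] (Fin 4 → ℝ) where
  toFun p := ![p.1, p.2.1, p.2.2.1, p.2.2.2]
  invFun v := (v 0, v 1, v 2, v 3)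
  map_add' p q := by funext i; fin_cases i <;> simp
  map_smul' c p := by funext i; fin_cases i <;> simp
  left_inv p := rfl
  right_inv v := by funext i; fin_cases i <;> simp

/-- CLM on `E4` given by a 4×4 matrix. -/
def clm4 (m : Matrix (Fin 4) (Fin 4) ℝ) : E4 →L[ℝ] E4 :=
  LinearMap.toContinuousLinearMap
    ((flat4.symm.toLinearMap.comp (Matrix.toLin' m)).comp flat4.toLinearMap)

lemma clm4_apply (m : Matrix (Fin 4) (Fin 4) ℝ) (p : E4) :
    clm4 m p = (m 0 0 * p.1 + m 0 1 * p.2.1 + m 0 2 * p.2.2.1 + m 0 3 * p.2.2.2,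
      m 1 0 * p.1 + m 1 1 * p.2.1 + m 1 2 * p.2.2.1 + m 1 3 * p.2.2.2,
      m 2 0 * p.1 + m 2 1 * p.2.1 + m 2 2 * p.2.2.1 + m 2 3 * p.2.2.2,
      m 3 0 * p.1 + m 3 1 * p.2.1 + m 3 2 * p.2.2.1 + m 3 3 * p.2.2.2) := by
  simp [clm4, flat4, Matrix.toLin'_apply, Matrix.mulVec, dotProduct,
    Fin.sum_univ_four]
  show (m.mulVec _ 0, m.mulVec _ 1, m.mulVec _ 2, m.mulVec _ 3) = _
  simp [Matrix.mulVec, dotProduct, Fin.sum_univ_four]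

lemma clm4_det (m : Matrix (Fin 4) (Fin 4) ℝ) : (clm4 m).det = m.det := by
  have h2 : ((flat4.symm.toLinearMap.comp (Matrix.toLin' m)).comp flat4.toLinearMap)
      = (flat4.symm : (Fin 4 → ℝ) →ₗ[ℝ] E4) ∘ₗ (Matrix.toLin' m) ∘ₗ
        ((flat4.symm.symm : E4 ≃ₗ[ℝ] (Fin 4 → ℝ)) : E4 →ₗ[ℝ] (Fin 4 → ℝ)) := by
    rw [LinearEquiv.symm_symm]; rfl
  rw [ContinuousLinearMap.det, show (clm4 m : E4 →ₗ[ℝ] E4)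
    = ((flat4.symm.toLinearMap.comp (Matrix.toLin' m)).comp flat4.toLinearMap) from rfl, h2,
    LinearMap.det_conj, LinearMap.det_toLin']

def e4equiv : F4 ≃ᵐ E4 := MeasurableEquiv.prodAssoc

lemma measurableSet_unitCube4 : MeasurableSet unitCube4 :=
  measurableSet_Ioo.prod (measurableSet_Ioo.prod (measurableSet_Ioo.prod measurableSet_Ioo))

/-! ### The five flattened maps, their Jacobian matrices and determinants -/

def g1 : E4 → E4 := fun q =>
  (q.1, q.1 * q.2.1 * q.2.2.2, q.1 * (1 - q.2.1 * q.2.2.1), q.1 * q.2.1 * (1 - q.2.2.1))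
def g2 : E4 → E4 := fun q =>
  (q.1, q.1 * q.2.1, q.1 * (1 - q.2.1 * q.2.2.1 * q.2.2.2),
    q.1 * q.2.1 * q.2.2.1 * (1 - q.2.2.2))
def g3 : E4 → E4 := fun q =>
  (q.1 * (1 - q.2.1 * q.2.2.1), q.1 * q.2.1 * (1 - q.2.2.1), q.1,
    q.1 * q.2.1 * q.2.2.1 * q.2.2.2)
def g4 : E4 → E4 := fun q =>
  (q.1 * (1 - q.2.1 * q.2.2.1 * q.2.2.2), q.1 * q.2.1 * q.2.2.1 * (1 - q.2.2.2), q.1,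
    q.1 * q.2.1)
def g5 : E4 → E4 := fun q =>
  (q.1 * (1 - q.2.1 * q.2.2.1 * q.2.2.2), q.1 * q.2.1 * (1 - q.2.2.1 * q.2.2.2), q.1,
    q.1 * q.2.1 * q.2.2.1)

lemma g1_eq : ∀ q, g1 q = e4equiv (TE1 q) := fun _ => rfl
lemma g2_eq : ∀ q, g2 q = e4equiv (TE2 q) := fun _ => rfl
lemma g3_eq : ∀ q, g3 q = e4equiv (TE3 q) := fun _ => rfl
lemma g4_eq : ∀ q, g4 q = e4equiv (TE4 q) := fun _ => rfl
lemma g5_eq : ∀ q, g5 q = e4equiv (TE5 q) := fun _ => rfl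

def M1 (q : E4) : Matrix (Fin 4) (Fin 4) ℝ :=
  !![1, 0, 0, 0;
     q.2.1 * q.2.2.2, q.1 * q.2.2.2, 0, q.1 * q.2.1;
     1 - q.2.1 * q.2.2.1, -(q.1 * q.2.2.1), -(q.1 * q.2.1), 0;
     q.2.1 * (1 - q.2.2.1), q.1 * (1 - q.2.2.1), -(q.1 * q.2.1), 0]
def M2 (q : E4) : Matrix (Fin 4) (Fin 4) ℝ :=
  !![1, 0, 0, 0;
     q.2.1, q.1, 0, 0;
     1 - q.2.1 * q.2.2.1 * q.2.2.2, -(q.1 * q.2.2.1 * q.2.2.2), -(q.1 * q.2.1 * q.2.2.2),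
       -(q.1 * q.2.1 * q.2.2.1);
     q.2.1 * q.2.2.1 * (1 - q.2.2.2), q.1 * q.2.2.1 * (1 - q.2.2.2),
       q.1 * q.2.1 * (1 - q.2.2.2), -(q.1 * q.2.1 * q.2.2.1)]
def M3 (q : E4) : Matrix (Fin 4) (Fin 4) ℝ :=
  !![1 - q.2.1 * q.2.2.1, -(q.1 * q.2.2.1), -(q.1 * q.2.1), 0;
     q.2.1 * (1 - q.2.2.1), q.1 * (1 - q.2.2.1), -(q.1 * q.2.1), 0;
     1, 0, 0, 0;
     q.2.1 * q.2.2.1 * q.2.2.2, q.1 * q.2.2.1 * q.2.2.2, q.1 * q.2.1 * q.2.2.2,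
       q.1 * q.2.1 * q.2.2.1]
def M4 (q : E4) : Matrix (Fin 4) (Fin 4) ℝ :=
  !![1 - q.2.1 * q.2.2.1 * q.2.2.2, -(q.1 * q.2.2.1 * q.2.2.2), -(q.1 * q.2.1 * q.2.2.2),
       -(q.1 * q.2.1 * q.2.2.1);
     q.2.1 * q.2.2.1 * (1 - q.2.2.2), q.1 * q.2.2.1 * (1 - q.2.2.2),
       q.1 * q.2.1 * (1 - q.2.2.2), -(q.1 * q.2.1 * q.2.2.1);
     1, 0, 0, 0;
     q.2.1, q.1, 0, 0]
def M5 (q : E4) : Matrix (Fin 4) (Fin 4) ℝ :=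
  !![1 - q.2.1 * q.2.2.1 * q.2.2.2, -(q.1 * q.2.2.1 * q.2.2.2), -(q.1 * q.2.1 * q.2.2.2),
       -(q.1 * q.2.1 * q.2.2.1);
     q.2.1 * (1 - q.2.2.1 * q.2.2.2), q.1 * (1 - q.2.2.1 * q.2.2.2), -(q.1 * q.2.1 * q.2.2.2),
       -(q.1 * q.2.1 * q.2.2.1);
     1, 0, 0, 0;
     q.2.1 * q.2.2.1, q.1 * q.2.2.1, q.1 * q.2.1, 0]

lemma detM1 (q : E4) : (M1 q).det = q.1 ^ 3 * q.2.1 ^ 2 := by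
  simp [M1, Matrix.det_succ_row_zero, Fin.sum_univ_succ]; ring
lemma detM2 (q : E4) : (M2 q).det = q.1 ^ 3 * (q.2.1 ^ 2 * q.2.2.1) := by
  simp [M2, Matrix.det_succ_row_zero, Fin.sum_univ_succ]; ring
lemma detM3 (q : E4) : (M3 q).det = q.1 ^ 3 * (q.2.1 ^ 2 * q.2.2.1) := by
  simp [M3, Matrix.det_succ_row_zero, Fin.sum_univ_succ, Fin.succAbove]; ring
lemma detM4 (q : E4) : (M4 q).det = q.1 ^ 3 * (q.2.1 ^ 2 * q.2.2.1) := by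
  simp [M4, Matrix.det_succ_row_zero, Fin.sum_univ_succ, Fin.succAbove]; ring
lemma detM5 (q : E4) : (M5 q).det = -(q.1 ^ 3 * (q.2.1 ^ 2 * q.2.2.1)) := by
  simp [M5, Matrix.det_succ_row_zero, Fin.sum_univ_succ, Fin.succAbove]; ring

section deriv

variable (q : E4)

lemma hx : HasFDerivAt (fun p : E4 => p.1) (ContinuousLinearMap.fst ℝ ℝ (ℝ×ℝ×ℝ)) q :=
  hasFDerivAt_fst
lemma ha : HasFDerivAt (fun p : E4 => p.2.1)
    ((ContinuousLinearMap.fst ℝ ℝ (ℝ×ℝ)).comp (ContinuousLinearMap.snd ℝ ℝ (ℝ×ℝ×ℝ))) q :=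
  hasFDerivAt_fst.comp q hasFDerivAt_snd
lemma hb : HasFDerivAt (fun p : E4 => p.2.2.1)
    (((ContinuousLinearMap.fst ℝ ℝ ℝ).comp (ContinuousLinearMap.snd ℝ ℝ (ℝ×ℝ))).comp
      (ContinuousLinearMap.snd ℝ ℝ (ℝ×ℝ×ℝ))) q :=
  (hasFDerivAt_fst.comp _ hasFDerivAt_snd).comp q hasFDerivAt_snd
lemma hc : HasFDerivAt (fun p : E4 => p.2.2.2)
    (((ContinuousLinearMap.snd ℝ ℝ ℝ).comp (ContinuousLinearMap.snd ℝ ℝ (ℝ×ℝ))).comp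
      (ContinuousLinearMap.snd ℝ ℝ (ℝ×ℝ×ℝ))) q :=
  (hasFDerivAt_snd.comp _ hasFDerivAt_snd).comp q hasFDerivAt_snd

lemma hasfd1 : HasFDerivAt g1 (clm4 (M1 q)) q := by
  have hh := (hx q).prodMk ((((hx q).mul (ha q)).mul (hc q)).prodMk
    (((hx q).mul ((hasFDerivAt_const (1:ℝ) q).sub ((ha q).mul (hb q)))).prodMk
      (((hx q).mul (ha q)).mul ((hasFDerivAt_const (1:ℝ) q).sub (hb q)))))
  refine hh.congr_fderiv ?_
  apply ContinuousLinearMap.ext; intro v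
  refine Prod.ext ?_ (Prod.ext ?_ (Prod.ext ?_ ?_)) <;>
    simp [clm4_apply, M1, Matrix.vecHead, Matrix.vecTail] <;> ring

lemma hasfd2 : HasFDerivAt g2 (clm4 (M2 q)) q := by
  have hh := (hx q).prodMk (((hx q).mul (ha q)).prodMk
    (((hx q).mul ((hasFDerivAt_const (1:ℝ) q).sub (((ha q).mul (hb q)).mul (hc q)))).prodMk
      ((((hx q).mul (ha q)).mul (hb q)).mul ((hasFDerivAt_const (1:ℝ) q).sub (hc q)))))
  refine hh.congr_fderiv ?_
  apply ContinuousLinearMap.ext; intro v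
  refine Prod.ext ?_ (Prod.ext ?_ (Prod.ext ?_ ?_)) <;>
    simp [clm4_apply, M2, Matrix.vecHead, Matrix.vecTail] <;> ring

lemma hasfd3 : HasFDerivAt g3 (clm4 (M3 q)) q := by
  have hh := ((hx q).mul ((hasFDerivAt_const (1:ℝ) q).sub ((ha q).mul (hb q)))).prodMk
    ((((hx q).mul (ha q)).mul ((hasFDerivAt_const (1:ℝ) q).sub (hb q))).prodMk
      ((hx q).prodMk ((((hx q).mul (ha q)).mul (hb q)).mul (hc q))))
  refine hh.congr_fderiv ?_
  apply ContinuousLinearMap.ext; intro v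
  refine Prod.ext ?_ (Prod.ext ?_ (Prod.ext ?_ ?_)) <;>
    simp [clm4_apply, M3, Matrix.vecHead, Matrix.vecTail] <;> ring

lemma hasfd4 : HasFDerivAt g4 (clm4 (M4 q)) q := by
  have hh := ((hx q).mul ((hasFDerivAt_const (1:ℝ) q).sub (((ha q).mul (hb q)).mul (hc q)))).prodMk
    (((((hx q).mul (ha q)).mul (hb q)).mul ((hasFDerivAt_const (1:ℝ) q).sub (hc q))).prodMk
      ((hx q).prodMk ((hx q).mul (ha q))))
  refine hh.congr_fderiv ?_
  apply ContinuousLinearMap.ext; intro v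
  refine Prod.ext ?_ (Prod.ext ?_ (Prod.ext ?_ ?_)) <;>
    simp [clm4_apply, M4, Matrix.vecHead, Matrix.vecTail] <;> ring

lemma hasfd5 : HasFDerivAt g5 (clm4 (M5 q)) q := by
  have hh := ((hx q).mul ((hasFDerivAt_const (1:ℝ) q).sub (((ha q).mul (hb q)).mul (hc q)))).prodMk
    ((((hx q).mul (ha q)).mul ((hasFDerivAt_const (1:ℝ) q).sub ((hb q).mul (hc q)))).prodMk
      ((hx q).prodMk (((hx q).mul (ha q)).mul (hb q))))
  refine hh.congr_fderiv ?_
  apply ContinuousLinearMap.ext; intro v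
  refine Prod.ext ?_ (Prod.ext ?_ (Prod.ext ?_ ?_)) <;>
    simp [clm4_apply, M5, Matrix.vecHead, Matrix.vecTail] <;> ring

end deriv

/-! ### The five regions -/

def U1 : Set F4 := {p | 0 < p.1.2 ∧ p.1.2 + p.2.1 < p.1.1 + p.2.2 ∧ p.2.2 < p.2.1 ∧
  p.2.1 < p.1.1 ∧ p.1.1 < 1 ∧ 0 < p.2.2}
def U2 : Set F4 := {p | 0 < p.1.2 ∧ p.1.2 < p.1.1 ∧ p.1.1 < 1 ∧ 0 < p.2.2 ∧
  p.2.1 < p.1.1 ∧ p.1.1 + p.2.2 < p.1.2 + p.2.1}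
def U3 : Set F4 := {p | 0 < p.1.2 ∧ p.1.2 < p.1.1 ∧ p.1.1 < p.2.1 ∧ p.2.1 < 1 ∧
  0 < p.2.2 ∧ p.1.1 + p.2.2 < p.2.1}
def U4 : Set F4 := {p | 0 < p.2.2 ∧ p.2.2 < p.2.1 ∧ p.2.1 < 1 ∧ 0 < p.1.2 ∧
  p.1.1 < p.2.1 ∧ p.1.2 + p.2.1 < p.1.1 + p.2.2}
def U5 : Set F4 := {p | 0 < p.1.2 ∧ p.1.2 < p.1.1 ∧ p.1.1 < p.2.1 ∧ p.2.1 < 1 ∧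
  0 < p.2.2 ∧ p.2.1 < p.1.1 + p.2.2 ∧ p.1.1 + p.2.2 < p.1.2 + p.2.1}

lemma isOpen_U1 : IsOpen U1 := by
  unfold U1; simp only [Set.setOf_and]
  repeat' apply IsOpen.inter
  all_goals apply isOpen_lt <;> fun_prop
lemma isOpen_U2 : IsOpen U2 := by
  unfold U2; simp only [Set.setOf_and]
  repeat' apply IsOpen.inter
  all_goals apply isOpen_lt <;> fun_prop
lemma isOpen_U3 : IsOpen U3 := by
  unfold U3; simp only [Set.setOf_and]
  repeat' apply IsOpen.inter
  all_goals apply isOpen_lt <;> fun_prop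
lemma isOpen_U4 : IsOpen U4 := by
  unfold U4; simp only [Set.setOf_and]
  repeat' apply IsOpen.inter
  all_goals apply isOpen_lt <;> fun_prop
lemma isOpen_U5 : IsOpen U5 := by
  unfold U5; simp only [Set.setOf_and]
  repeat' apply IsOpen.inter
  all_goals apply isOpen_lt <;> fun_prop

lemma U1_subset : U1 ⊆ refTriangle ×ˢ refTriangle := by
  rintro ⟨⟨x1, x2⟩, ⟨y1, y2⟩⟩ ⟨h1, h2, h3, h4, h5, h6⟩
  exact ⟨⟨by linarith, by linarith, by linarith⟩, ⟨by linarith, by linarith, by linarith⟩⟩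
lemma U2_subset : U2 ⊆ refTriangle ×ˢ refTriangle := by
  rintro ⟨⟨x1, x2⟩, ⟨y1, y2⟩⟩ ⟨h1, h2, h3, h4, h5, h6⟩
  exact ⟨⟨by linarith, by linarith, by linarith⟩, ⟨by linarith, by linarith, by linarith⟩⟩
lemma U3_subset : U3 ⊆ refTriangle ×ˢ refTriangle := by
  rintro ⟨⟨x1, x2⟩, ⟨y1, y2⟩⟩ ⟨h1, h2, h3, h4, h5, h6⟩
  exact ⟨⟨by linarith, by linarith, by linarith⟩, ⟨by linarith, by linarith, by linarith⟩⟩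
lemma U4_subset : U4 ⊆ refTriangle ×ˢ refTriangle := by
  rintro ⟨⟨x1, x2⟩, ⟨y1, y2⟩⟩ ⟨h1, h2, h3, h4, h5, h6⟩
  exact ⟨⟨by linarith, by linarith, by linarith⟩, ⟨by linarith, by linarith, by linarith⟩⟩
lemma U5_subset : U5 ⊆ refTriangle ×ˢ refTriangle := by
  rintro ⟨⟨x1, x2⟩, ⟨y1, y2⟩⟩ ⟨h1, h2, h3, h4, h5, h6, h7⟩
  exact ⟨⟨by linarith, by linarith, by linarith⟩, ⟨by linarith, by linarith, by linarith⟩⟩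

lemma disj12 : Disjoint U1 U2 := Set.disjoint_left.mpr fun p h1 h2 => by
  obtain ⟨_, a2, _, _, _, _⟩ := h1; obtain ⟨_, _, _, _, _, b6⟩ := h2; linarith
lemma disj13 : Disjoint U1 U3 := Set.disjoint_left.mpr fun p h1 h2 => by
  obtain ⟨_, _, _, a4, _, _⟩ := h1; obtain ⟨_, _, b3, _, _, _⟩ := h2; linarith
lemma disj14 : Disjoint U1 U4 := Set.disjoint_left.mpr fun p h1 h2 => by
  obtain ⟨_, _, _, a4, _, _⟩ := h1; obtain ⟨_, _, _, _, b5, _⟩ := h2; linarith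
lemma disj15 : Disjoint U1 U5 := Set.disjoint_left.mpr fun p h1 h2 => by
  obtain ⟨_, _, _, a4, _, _⟩ := h1; obtain ⟨_, _, b3, _, _, _, _⟩ := h2; linarith
lemma disj23 : Disjoint U2 U3 := Set.disjoint_left.mpr fun p h1 h2 => by
  obtain ⟨_, _, _, _, a5, _⟩ := h1; obtain ⟨_, _, b3, _, _, _⟩ := h2; linarith
lemma disj24 : Disjoint U2 U4 := Set.disjoint_left.mpr fun p h1 h2 => by
  obtain ⟨_, _, _, _, a5, _⟩ := h1; obtain ⟨_, _, _, _, b5, _⟩ := h2; linarith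
lemma disj25 : Disjoint U2 U5 := Set.disjoint_left.mpr fun p h1 h2 => by
  obtain ⟨_, _, _, _, a5, _⟩ := h1; obtain ⟨_, _, b3, _, _, _, _⟩ := h2; linarith
lemma disj34 : Disjoint U3 U4 := Set.disjoint_left.mpr fun p h1 h2 => by
  obtain ⟨_, _, _, _, a5, a6⟩ := h1; obtain ⟨b1, _, _, b4, _, b6⟩ := h2; linarith
lemma disj35 : Disjoint U3 U5 := Set.disjoint_left.mpr fun p h1 h2 => by
  obtain ⟨_, _, _, _, _, a6⟩ := h1; obtain ⟨_, _, _, _, _, b6, _⟩ := h2; linarith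
lemma disj45 : Disjoint U4 U5 := Set.disjoint_left.mpr fun p h1 h2 => by
  obtain ⟨_, _, _, _, _, a6⟩ := h1; obtain ⟨_, _, _, _, _, _, b7⟩ := h2; linarith


/-! ### Injectivity -/

lemma inj1 : Set.InjOn g1 unitCube4 := by
  rintro ⟨ξ, a, b, c⟩ ⟨⟨hξ0, _⟩, ⟨ha0, _⟩, _, _⟩ ⟨ξ', a', b', c'⟩ ⟨_, _, _, _⟩ h
  simp only [g1, Prod.mk.injEq] at h
  obtain ⟨e1, e2, e3, e4⟩ := h
  subst e1
  have c3 : ξ * (a * b) = ξ * (a' * b') := by linear_combination -e3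
  have hab := mul_left_cancel₀ hξ0.ne' c3
  have c4 : ξ * a = ξ * a' := by linear_combination e4 + c3
  have haa := mul_left_cancel₀ hξ0.ne' c4
  subst haa
  have hbb : b = b' := mul_left_cancel₀ ha0.ne' hab
  subst hbb
  have c2 : (ξ * a) * c = (ξ * a) * c' := by linear_combination e2
  have hcc := mul_left_cancel₀ (mul_pos hξ0 ha0).ne' c2
  subst hcc; rfl

lemma inj2 : Set.InjOn g2 unitCube4 := by
  rintro ⟨ξ, a, b, c⟩ ⟨⟨hξ0, _⟩, ⟨ha0, _⟩, ⟨hb0, _⟩, _⟩ ⟨ξ', a', b', c'⟩ ⟨_, _, _, _⟩ h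
  simp only [g2, Prod.mk.injEq] at h
  obtain ⟨e1, e2, e3, e4⟩ := h
  subst e1
  have haa := mul_left_cancel₀ hξ0.ne' e2
  subst haa
  have c3 : ξ * (a * (b * c)) = ξ * (a * (b' * c')) := by linear_combination -e3
  have hbc := mul_left_cancel₀ ha0.ne' (mul_left_cancel₀ hξ0.ne' c3)
  have c4 : (ξ * a) * b = (ξ * a) * b' := by linear_combination e4 + (ξ * a) * hbc
  have hbb := mul_left_cancel₀ (mul_pos hξ0 ha0).ne' c4
  subst hbb
  have hcc := mul_left_cancel₀ hb0.ne' hbc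
  subst hcc; rfl

lemma inj3 : Set.InjOn g3 unitCube4 := by
  rintro ⟨ξ, a, b, c⟩ ⟨⟨hξ0, _⟩, ⟨ha0, _⟩, ⟨hb0, _⟩, _⟩ ⟨ξ', a', b', c'⟩ ⟨_, _, _, _⟩ h
  simp only [g3, Prod.mk.injEq] at h
  obtain ⟨e1, e2, e3, e4⟩ := h
  subst e3
  have c1 : ξ * (a * b) = ξ * (a' * b') := by linear_combination -e1
  have hab := mul_left_cancel₀ hξ0.ne' c1
  have c2 : ξ * a = ξ * a' := by linear_combination e2 + c1
  have haa := mul_left_cancel₀ hξ0.ne' c2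
  subst haa
  have hbb : b = b' := mul_left_cancel₀ ha0.ne' hab
  subst hbb
  have c4 : (ξ * a * b) * c = (ξ * a * b) * c' := by linear_combination e4
  have hcc := mul_left_cancel₀ (mul_pos (mul_pos hξ0 ha0) hb0).ne' c4
  subst hcc; rfl

lemma inj4 : Set.InjOn g4 unitCube4 := by
  rintro ⟨ξ, a, b, c⟩ ⟨⟨hξ0, _⟩, ⟨ha0, _⟩, ⟨hb0, _⟩, _⟩ ⟨ξ', a', b', c'⟩ ⟨_, _, _, _⟩ h
  simp only [g4, Prod.mk.injEq] at h
  obtain ⟨e1, e2, e3, e4⟩ := h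
  subst e3
  have haa := mul_left_cancel₀ hξ0.ne' e4
  subst haa
  have c1 : ξ * (a * (b * c)) = ξ * (a * (b' * c')) := by linear_combination -e1
  have hbc := mul_left_cancel₀ ha0.ne' (mul_left_cancel₀ hξ0.ne' c1)
  have c2 : (ξ * a) * b = (ξ * a) * b' := by linear_combination e2 + (ξ * a) * hbc
  have hbb := mul_left_cancel₀ (mul_pos hξ0 ha0).ne' c2
  subst hbb
  have hcc := mul_left_cancel₀ hb0.ne' hbc
  subst hcc; rfl

lemma inj5 : Set.InjOn g5 unitCube4 := by
  rintro ⟨ξ, a, b, c⟩ ⟨⟨hξ0, _⟩, ⟨ha0, _⟩, ⟨hb0, _⟩, _⟩ ⟨ξ', a', b', c'⟩ ⟨_, _, _, _⟩ h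
  simp only [g5, Prod.mk.injEq] at h
  obtain ⟨e1, e2, e3, e4⟩ := h
  subst e3
  have c1 : ξ * (a * (b * c)) = ξ * (a' * (b' * c')) := by linear_combination -e1
  have habc := mul_left_cancel₀ hξ0.ne' c1
  have c2 : ξ * a = ξ * a' := by linear_combination e2 + c1
  have haa := mul_left_cancel₀ hξ0.ne' c2
  subst haa
  have hbc := mul_left_cancel₀ ha0.ne' habc
  have c4 : (ξ * a) * b = (ξ * a) * b' := by linear_combination e4
  have hbb := mul_left_cancel₀ (mul_pos hξ0 ha0).ne' c4
  subst hbb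
  have hcc := mul_left_cancel₀ hb0.ne' hbc
  subst hcc; rfl

/-! ### Images -/

lemma img1 : TE1 '' unitCube4 = U1 := by
  apply Set.eq_of_subset_of_subset
  · rintro p ⟨⟨ξ, a, b, c⟩, ⟨⟨hξ0, hξ1⟩, ⟨ha0, ha1⟩, ⟨hb0, hb1⟩, ⟨hc0, hc1⟩⟩, rfl⟩
    simp only [TE1] at *
    refine ⟨?_, ?_, ?_, ?_, ?_, ?_⟩ <;> dsimp only <;>
      nlinarith [mul_pos hξ0 ha0, mul_pos (mul_pos hξ0 ha0) hb0,
        mul_pos (mul_pos (mul_pos hξ0 ha0) hb0) hc0, mul_pos (mul_pos hξ0 ha0) hc0,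
        mul_pos hξ0 (sub_pos.mpr ha1), mul_pos (mul_pos hξ0 ha0) (sub_pos.mpr hb1),
        mul_pos (mul_pos hξ0 ha0) (sub_pos.mpr hc1),
        mul_pos (mul_pos (mul_pos hξ0 ha0) hb0) (sub_pos.mpr hc1)]
  · rintro ⟨⟨x1, x2⟩, ⟨y1, y2⟩⟩ ⟨h1, h2, h3, h4, h5, h6⟩
    have hx1 : 0 < x1 := by linarith
    have hA : 0 < y2 + x1 - y1 := by linarith
    refine ⟨(x1, (y2 + x1 - y1) / x1, (x1 - y1) / (y2 + x1 - y1), x2 / (y2 + x1 - y1)),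
      ⟨⟨hx1, h5⟩, ⟨div_pos hA hx1, (div_lt_one hx1).mpr (by linarith)⟩,
        ⟨div_pos (by linarith) hA, (div_lt_one hA).mpr (by linarith)⟩,
        ⟨div_pos h1 hA, (div_lt_one hA).mpr (by linarith)⟩⟩, ?_⟩
    have hx1' := hx1.ne'
    have hA' := hA.ne'
    simp only [TE1, Prod.mk.injEq]
    refine ⟨⟨trivial, ?_⟩, ?_, ?_⟩ <;> field_simp <;> ring

lemma img2 : TE2 '' unitCube4 = U2 := by
  apply Set.eq_of_subset_of_subset
  · rintro p ⟨⟨ξ, a, b, c⟩, ⟨⟨hξ0, hξ1⟩, ⟨ha0, ha1⟩, ⟨hb0, hb1⟩, ⟨hc0, hc1⟩⟩, rfl⟩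
    simp only [TE2] at *
    refine ⟨?_, ?_, ?_, ?_, ?_, ?_⟩ <;> dsimp only <;>
      nlinarith [mul_pos hξ0 ha0, mul_pos (mul_pos hξ0 ha0) hb0,
        mul_pos (mul_pos (mul_pos hξ0 ha0) hb0) hc0, mul_pos (mul_pos hξ0 ha0) hc0,
        mul_pos hξ0 (sub_pos.mpr ha1), mul_pos (mul_pos hξ0 ha0) (sub_pos.mpr hb1),
        mul_pos (mul_pos hξ0 ha0) (sub_pos.mpr hc1),
        mul_pos (mul_pos (mul_pos hξ0 ha0) hb0) (sub_pos.mpr hc1)]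
  · rintro ⟨⟨x1, x2⟩, ⟨y1, y2⟩⟩ ⟨h1, h2, h3, h4, h5, h6⟩
    have hx1 : 0 < x1 := by linarith
    have hB : 0 < y2 + x1 - y1 := by linarith
    refine ⟨(x1, x2 / x1, (y2 + x1 - y1) / x2, (x1 - y1) / (y2 + x1 - y1)),
      ⟨⟨hx1, h3⟩, ⟨div_pos h1 hx1, (div_lt_one hx1).mpr h2⟩,
        ⟨div_pos hB h1, (div_lt_one h1).mpr (by linarith)⟩,
        ⟨div_pos (by linarith) hB, (div_lt_one hB).mpr (by linarith)⟩⟩, ?_⟩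
    have hx1' := hx1.ne'
    have hB' := hB.ne'
    have h1' := h1.ne'
    simp only [TE2, Prod.mk.injEq]
    refine ⟨⟨trivial, ?_⟩, ?_, ?_⟩ <;> field_simp <;> ring

lemma img3 : TE3 '' unitCube4 = U3 := by
  apply Set.eq_of_subset_of_subset
  · rintro p ⟨⟨ξ, a, b, c⟩, ⟨⟨hξ0, hξ1⟩, ⟨ha0, ha1⟩, ⟨hb0, hb1⟩, ⟨hc0, hc1⟩⟩, rfl⟩
    simp only [TE3] at *
    refine ⟨?_, ?_, ?_, ?_, ?_, ?_⟩ <;> dsimp only <;>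
      nlinarith [mul_pos hξ0 ha0, mul_pos (mul_pos hξ0 ha0) hb0,
        mul_pos (mul_pos (mul_pos hξ0 ha0) hb0) hc0, mul_pos (mul_pos hξ0 ha0) hc0,
        mul_pos hξ0 (sub_pos.mpr ha1), mul_pos (mul_pos hξ0 ha0) (sub_pos.mpr hb1),
        mul_pos (mul_pos hξ0 ha0) (sub_pos.mpr hc1),
        mul_pos (mul_pos (mul_pos hξ0 ha0) hb0) (sub_pos.mpr hc1)]
  · rintro ⟨⟨x1, x2⟩, ⟨y1, y2⟩⟩ ⟨h1, h2, h3, h4, h5, h6⟩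
    have hy1 : 0 < y1 := by linarith
    have hA : 0 < x2 + y1 - x1 := by linarith
    have hyx : 0 < y1 - x1 := by linarith
    refine ⟨(y1, (x2 + y1 - x1) / y1, (y1 - x1) / (x2 + y1 - x1), y2 / (y1 - x1)),
      ⟨⟨hy1, h4⟩, ⟨div_pos hA hy1, (div_lt_one hy1).mpr (by linarith)⟩,
        ⟨div_pos hyx hA, (div_lt_one hA).mpr (by linarith)⟩,
        ⟨div_pos h5 hyx, (div_lt_one hyx).mpr (by linarith)⟩⟩, ?_⟩
    have hy1' := hy1.ne'
    have hA' := hA.ne'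
    have hyx' := hyx.ne'
    simp only [TE3, Prod.mk.injEq]
    refine ⟨⟨?_, ?_⟩, trivial, ?_⟩ <;> field_simp <;> ring

lemma img4 : TE4 '' unitCube4 = U4 := by
  apply Set.eq_of_subset_of_subset
  · rintro p ⟨⟨ξ, a, b, c⟩, ⟨⟨hξ0, hξ1⟩, ⟨ha0, ha1⟩, ⟨hb0, hb1⟩, ⟨hc0, hc1⟩⟩, rfl⟩
    simp only [TE4] at *
    refine ⟨?_, ?_, ?_, ?_, ?_, ?_⟩ <;> dsimp only <;>
      nlinarith [mul_pos hξ0 ha0, mul_pos (mul_pos hξ0 ha0) hb0,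
        mul_pos (mul_pos (mul_pos hξ0 ha0) hb0) hc0, mul_pos (mul_pos hξ0 ha0) hc0,
        mul_pos hξ0 (sub_pos.mpr ha1), mul_pos (mul_pos hξ0 ha0) (sub_pos.mpr hb1),
        mul_pos (mul_pos hξ0 ha0) (sub_pos.mpr hc1),
        mul_pos (mul_pos (mul_pos hξ0 ha0) hb0) (sub_pos.mpr hc1)]
  · rintro ⟨⟨x1, x2⟩, ⟨y1, y2⟩⟩ ⟨h1, h2, h3, h4, h5, h6⟩
    have hy1 : 0 < y1 := by linarith
    have hB : 0 < x2 + y1 - x1 := by linarith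
    refine ⟨(y1, y2 / y1, (x2 + y1 - x1) / y2, (y1 - x1) / (x2 + y1 - x1)),
      ⟨⟨hy1, h3⟩, ⟨div_pos h1 hy1, (div_lt_one hy1).mpr h2⟩,
        ⟨div_pos hB h1, (div_lt_one h1).mpr (by linarith)⟩,
        ⟨div_pos (by linarith) hB, (div_lt_one hB).mpr (by linarith)⟩⟩, ?_⟩
    have hy1' := hy1.ne'
    have hB' := hB.ne'
    have h1' := h1.ne'
    simp only [TE4, Prod.mk.injEq]
    refine ⟨⟨?_, ?_⟩, trivial, ?_⟩ <;> field_simp <;> ring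

lemma img5 : TE5 '' unitCube4 = U5 := by
  apply Set.eq_of_subset_of_subset
  · rintro p ⟨⟨ξ, a, b, c⟩, ⟨⟨hξ0, hξ1⟩, ⟨ha0, ha1⟩, ⟨hb0, hb1⟩, ⟨hc0, hc1⟩⟩, rfl⟩
    simp only [TE5] at *
    refine ⟨?_, ?_, ?_, ?_, ?_, ?_, ?_⟩ <;> dsimp only <;>
      nlinarith [mul_pos hξ0 ha0, mul_pos (mul_pos hξ0 ha0) hb0,
        mul_pos (mul_pos (mul_pos hξ0 ha0) hb0) hc0, mul_pos (mul_pos hξ0 ha0) hc0,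
        mul_pos hξ0 (sub_pos.mpr ha1), mul_pos (mul_pos hξ0 ha0) (sub_pos.mpr hb1),
        mul_pos (mul_pos hξ0 ha0) (sub_pos.mpr hc1),
        mul_pos (mul_pos (mul_pos hξ0 ha0) hb0) (sub_pos.mpr hc1)]
  · rintro ⟨⟨x1, x2⟩, ⟨y1, y2⟩⟩ ⟨h1, h2, h3, h4, h5, h6, h7⟩
    have hy1 : 0 < y1 := by linarith
    have hA : 0 < x2 + y1 - x1 := by linarith
    refine ⟨(y1, (x2 + y1 - x1) / y1, y2 / (x2 + y1 - x1), (y1 - x1) / y2),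
      ⟨⟨hy1, h4⟩, ⟨div_pos hA hy1, (div_lt_one hy1).mpr (by linarith)⟩,
        ⟨div_pos h5 hA, (div_lt_one hA).mpr (by linarith)⟩,
        ⟨div_pos (by linarith) h5, (div_lt_one h5).mpr (by linarith)⟩⟩, ?_⟩
    have hy1' := hy1.ne'
    have hA' := hA.ne'
    have h5' := h5.ne'
    simp only [TE5, Prod.mk.injEq]
    refine ⟨⟨?_, ?_⟩, trivial, ?_⟩ <;> field_simp <;> ring


/-! ### Null hyperplanes -/

def LX1 : F4 →ₗ[ℝ] ℝ := (LinearMap.fst ℝ ℝ ℝ).comp (LinearMap.fst ℝ (ℝ×ℝ) (ℝ×ℝ))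
def LX2 : F4 →ₗ[ℝ] ℝ := (LinearMap.snd ℝ ℝ ℝ).comp (LinearMap.fst ℝ (ℝ×ℝ) (ℝ×ℝ))
def LY1 : F4 →ₗ[ℝ] ℝ := (LinearMap.fst ℝ ℝ ℝ).comp (LinearMap.snd ℝ (ℝ×ℝ) (ℝ×ℝ))
def LY2 : F4 →ₗ[ℝ] ℝ := (LinearMap.snd ℝ ℝ ℝ).comp (LinearMap.snd ℝ (ℝ×ℝ) (ℝ×ℝ))

@[simp] lemma LX1_apply (p : F4) : LX1 p = p.1.1 := rfl
@[simp] lemma LX2_apply (p : F4) : LX2 p = p.1.2 := rfl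
@[simp] lemma LY1_apply (p : F4) : LY1 p = p.2.1 := rfl
@[simp] lemma LY2_apply (p : F4) : LY2 p = p.2.2 := rfl

lemma null_plane (φ : F4 →ₗ[ℝ] ℝ) (c : ℝ) (p₀ : F4) (h : φ p₀ ≠ c) :
    volume {p : F4 | φ p = c} = 0 := by
  by_cases hc : ∃ p₁, φ p₁ = c
  · obtain ⟨p₁, hp₁⟩ := hc
    have hset : {p : F4 | φ p = c} = (fun x => -p₁ + x) ⁻¹' (LinearMap.ker φ : Set F4) := by
      ext p
      simp only [Set.mem_setOf_eq, Set.mem_preimage, SetLike.mem_coe, LinearMap.mem_ker,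
        map_add, map_neg, hp₁]
      constructor
      · intro hp; rw [hp]; ring
      · intro hp; linarith
    rw [hset, measure_preimage_add]
    apply Measure.addHaar_submodule
    intro htop
    exact h (by rw [LinearMap.ker_eq_top] at htop; rw [htop] at hp₁ ⊢; exact hp₁)
  · have : {p : F4 | φ p = c} = ∅ := by
      ext p; simp only [Set.mem_setOf_eq, Set.mem_empty_iff_false, iff_false]
      exact fun hp => hc ⟨p, hp⟩
    simp [this]

lemma cover : (refTriangle ×ˢ refTriangle : Set F4) \ (U1 ∪ U2 ∪ U3 ∪ U4 ∪ U5) ⊆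
    {p : F4 | p.1.2 = 0} ∪ {p : F4 | p.2.2 = 0} ∪ {p : F4 | p.1.1 - p.2.1 = 0} ∪
    {p : F4 | p.1.1 = 1} ∪ {p : F4 | p.2.1 = 1} ∪ {p : F4 | p.1.2 - p.1.1 = 0} ∪
    {p : F4 | p.2.2 - p.2.1 = 0} ∪ {p : F4 | p.1.2 + p.2.1 - (p.1.1 + p.2.2) = 0} ∪
    {p : F4 | p.1.1 + p.2.2 - p.2.1 = 0} := by
  rintro ⟨⟨x1, x2⟩, ⟨y1, y2⟩⟩ ⟨⟨⟨hx2a, hx2b, hx1b⟩, ⟨hy2a, hy2b, hy1b⟩⟩, hnU⟩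
  dsimp only at hx2a hx2b hx1b hy2a hy2b hy1b
  by_contra hC
  simp only [Set.mem_union, Set.mem_setOf_eq, not_or] at hC
  obtain ⟨⟨⟨⟨⟨⟨⟨⟨n1, n2⟩, n3⟩, n4⟩, n5⟩, n6⟩, n7⟩, n8⟩, n9⟩ := hC
  apply hnU
  have hx2 : 0 < x2 := hx2a.lt_of_ne' (by simpa using n1)
  have hy2 : 0 < y2 := hy2a.lt_of_ne' (by simpa using n2)
  have hx1 : x1 < 1 := hx1b.lt_of_ne (by simpa using n4)
  have hy1 : y1 < 1 := hy1b.lt_of_ne (by simpa using n5)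
  have hx2x1 : x2 < x1 := hx2b.lt_of_ne (by intro h; exact n6 (by rw [h]; ring))
  have hy2y1 : y2 < y1 := hy2b.lt_of_ne (by intro h; exact n7 (by rw [h]; ring))
  have hxy : x1 ≠ y1 := fun h => n3 (by rw [h]; ring)
  have h8 : x2 + y1 ≠ x1 + y2 := fun h => n8 (by rw [h]; ring)
  rcases lt_or_gt_of_ne hxy with hlt | hgt
  · -- x1 < y1 : regions 3, 4, 5
    have h9 : x1 + y2 ≠ y1 := fun h => n9 (by rw [h]; ring)
    rcases lt_or_gt_of_ne h9 with h9lt | h9gt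
    · exact Or.inl (Or.inl (Or.inr ⟨hx2, hx2x1, hlt, hy1, hy2, h9lt⟩))
    · rcases lt_or_gt_of_ne h8 with h8lt | h8gt
      · exact Or.inl (Or.inr ⟨hy2, hy2y1, hy1, hx2, hlt, h8lt⟩)
      · exact Or.inr ⟨hx2, hx2x1, hlt, hy1, hy2, by linarith, by linarith⟩
  · -- y1 < x1 : regions 1, 2
    rcases lt_or_gt_of_ne h8 with h8lt | h8gt
    · exact Or.inl (Or.inl (Or.inl (Or.inl ⟨hx2, by linarith, hy2y1, hgt, hx1, hy2⟩)))
    · exact Or.inl (Or.inl (Or.inl (Or.inr ⟨hx2, hx2x1, hx1, hy2, hgt, by linarith⟩)))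

lemma compl_null :
    volume ((refTriangle ×ˢ refTriangle : Set F4) \ (U1 ∪ U2 ∪ U3 ∪ U4 ∪ U5)) = 0 := by
  refine measure_mono_null cover ?_
  have h1 : volume {p : F4 | p.1.2 = 0} = 0 := by
    simpa using null_plane LX2 0 ((0, 1), (0, 0)) (by norm_num)
  have h2 : volume {p : F4 | p.2.2 = 0} = 0 := by
    simpa using null_plane LY2 0 ((0, 0), (0, 1)) (by norm_num)
  have h3 : volume {p : F4 | p.1.1 - p.2.1 = 0} = 0 := by
    simpa using null_plane (LX1 - LY1) 0 ((1, 0), (0, 0)) (by norm_num)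
  have h4 : volume {p : F4 | p.1.1 = 1} = 0 := by
    simpa using null_plane LX1 1 ((0, 0), (0, 0)) (by norm_num)
  have h5 : volume {p : F4 | p.2.1 = 1} = 0 := by
    simpa using null_plane LY1 1 ((0, 0), (0, 0)) (by norm_num)
  have h6 : volume {p : F4 | p.1.2 - p.1.1 = 0} = 0 := by
    simpa using null_plane (LX2 - LX1) 0 ((1, 0), (0, 0)) (by norm_num)
  have h7 : volume {p : F4 | p.2.2 - p.2.1 = 0} = 0 := by
    simpa using null_plane (LY2 - LY1) 0 ((0, 0), (1, 0)) (by norm_num)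
  have h8 : volume {p : F4 | p.1.2 + p.2.1 - (p.1.1 + p.2.2) = 0} = 0 := by
    simpa using null_plane (LX2 + LY1 - (LX1 + LY2)) 0 ((0, 1), (0, 0)) (by norm_num)
  have h9 : volume {p : F4 | p.1.1 + p.2.2 - p.2.1 = 0} = 0 := by
    simpa using null_plane (LX1 + LY2 - LY1) 0 ((1, 0), (0, 0)) (by norm_num)
  exact measure_union_null (measure_union_null (measure_union_null (measure_union_null
    (measure_union_null (measure_union_null (measure_union_null
      (measure_union_null h1 h2) h3) h4) h5) h6) h7) h8) h9

/-! ### Change of variables -/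

lemma cov_step (f : F4 → ℝ) (T : E4 → F4) (g : E4 → E4) (M : E4 → Matrix (Fin 4) (Fin 4) ℝ)
    (U : Set F4) (jac : E4 → ℝ)
    (hg : ∀ q, g q = e4equiv (T q))
    (hder : ∀ q, HasFDerivAt g (clm4 (M q)) q)
    (hinj : Set.InjOn g unitCube4)
    (himg : T '' unitCube4 = U)
    (hjac : ∀ q ∈ unitCube4, |(M q).det| = jac q) :
    ∫ q in unitCube4, f (T q) * jac q = ∫ p in U, f p := by
  have hmp : MeasurePreserving (⇑e4equiv) volume volume :=
    measurePreserving_prodAssoc volume volume volume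
  have cov := integral_image_eq_integral_abs_det_fderiv_smul volume measurableSet_unitCube4
      (fun q _ => (hder q).hasFDerivWithinAt) hinj (fun x => f (e4equiv.symm x))
  have himg2 : g '' unitCube4 = e4equiv.symm ⁻¹' U := by
    rw [← himg]
    ext x
    simp only [Set.mem_image, Set.mem_preimage]
    constructor
    · rintro ⟨q, hq, rfl⟩
      exact ⟨q, hq, by rw [hg q, MeasurableEquiv.symm_apply_apply]⟩
    · rintro ⟨q, hq, hTq⟩
      exact ⟨q, hq, by rw [hg q, hTq, MeasurableEquiv.apply_symm_apply]⟩
  rw [himg2] at cov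
  have lhs : ∫ x in e4equiv.symm ⁻¹' U, f (e4equiv.symm x) = ∫ p in U, f p :=
    (hmp.symm e4equiv).setIntegral_preimage_emb e4equiv.symm.measurableEmbedding _ _
  rw [lhs] at cov
  rw [cov]
  apply setIntegral_congr_fun measurableSet_unitCube4
  intro q hq
  simp only [hg q, MeasurableEquiv.symm_apply_apply, clm4_det, hjac q hq, smul_eq_mul]
  rw [mul_comm]

end SSAux

end SSAux

open SSAux
/-- Sauter–Schwab-type decomposition of `τ̂ × τ̂` for the edge-sharing case:
`∫_{τ̂×τ̂} f = Σ_{k=1}^5 ∫_{(0,1)⁴} f(T_E^{(k)}(ξ,η)) ξ³ J_E^{(k)}(η) dξ dη` with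
`J_E^{(1)} = η₁²` and `J_E^{(k)} = η₁²η₂` for `k = 2,…,5`. -/
theorem sauter_schwab_edge_decomposition
    (f : (ℝ × ℝ) × (ℝ × ℝ) → ℝ)
    (hf : IntegrableOn f (refTriangle ×ˢ refTriangle)) :
    ∫ p in refTriangle ×ˢ refTriangle, f p
      = (∫ q in unitCube4, f (TE1 q) * (q.1 ^ 3 * q.2.1 ^ 2))
        + (∫ q in unitCube4, f (TE2 q) * (q.1 ^ 3 * (q.2.1 ^ 2 * q.2.2.1)))
        + (∫ q in unitCube4, f (TE3 q) * (q.1 ^ 3 * (q.2.1 ^ 2 * q.2.2.1)))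
        + (∫ q in unitCube4, f (TE4 q) * (q.1 ^ 3 * (q.2.1 ^ 2 * q.2.2.1)))
        + ∫ q in unitCube4, f (TE5 q) * (q.1 ^ 3 * (q.2.1 ^ 2 * q.2.2.1)) := by
  have jnn : ∀ q : E4, q ∈ unitCube4 → 0 ≤ q.1 ^ 3 * (q.2.1 ^ 2 * q.2.2.1) := by
    rintro ⟨ξ, a, b, c⟩ ⟨⟨hξ0, _⟩, ⟨ha0, _⟩, ⟨hb0, _⟩, _⟩
    exact mul_nonneg (pow_nonneg hξ0.le 3) (mul_nonneg (pow_nonneg ha0.le 2) hb0.le)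
  have step1 : (∫ q in unitCube4, f (TE1 q) * (q.1 ^ 3 * q.2.1 ^ 2)) = ∫ p in U1, f p :=
    cov_step f TE1 g1 M1 U1 (fun q => q.1 ^ 3 * q.2.1 ^ 2) g1_eq hasfd1 inj1 img1
      (by rintro ⟨ξ, a, b, c⟩ ⟨⟨hξ0, _⟩, ⟨ha0, _⟩, _, _⟩
          rw [detM1]
          exact abs_of_nonneg (mul_nonneg (pow_nonneg hξ0.le 3) (pow_nonneg ha0.le 2)))
  have step2 : (∫ q in unitCube4, f (TE2 q) * (q.1 ^ 3 * (q.2.1 ^ 2 * q.2.2.1)))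
      = ∫ p in U2, f p :=
    cov_step f TE2 g2 M2 U2 (fun q => q.1 ^ 3 * (q.2.1 ^ 2 * q.2.2.1)) g2_eq hasfd2 inj2 img2
      (fun q hq => by rw [detM2]; exact abs_of_nonneg (jnn q hq))
  have step3 : (∫ q in unitCube4, f (TE3 q) * (q.1 ^ 3 * (q.2.1 ^ 2 * q.2.2.1)))
      = ∫ p in U3, f p :=
    cov_step f TE3 g3 M3 U3 (fun q => q.1 ^ 3 * (q.2.1 ^ 2 * q.2.2.1)) g3_eq hasfd3 inj3 img3
      (fun q hq => by rw [detM3]; exact abs_of_nonneg (jnn q hq))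
  have step4 : (∫ q in unitCube4, f (TE4 q) * (q.1 ^ 3 * (q.2.1 ^ 2 * q.2.2.1)))
      = ∫ p in U4, f p :=
    cov_step f TE4 g4 M4 U4 (fun q => q.1 ^ 3 * (q.2.1 ^ 2 * q.2.2.1)) g4_eq hasfd4 inj4 img4
      (fun q hq => by rw [detM4]; exact abs_of_nonneg (jnn q hq))
  have step5 : (∫ q in unitCube4, f (TE5 q) * (q.1 ^ 3 * (q.2.1 ^ 2 * q.2.2.1)))
      = ∫ p in U5, f p :=
    cov_step f TE5 g5 M5 U5 (fun q => q.1 ^ 3 * (q.2.1 ^ 2 * q.2.2.1)) g5_eq hasfd5 inj5 img5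
      (fun q hq => by rw [detM5, abs_neg]; exact abs_of_nonneg (jnn q hq))
  rw [step1, step2, step3, step4, step5]
  have m1 := isOpen_U1.measurableSet
  have m2 := isOpen_U2.measurableSet
  have m3 := isOpen_U3.measurableSet
  have m4 := isOpen_U4.measurableSet
  have m5 := isOpen_U5.measurableSet
  have i1 : IntegrableOn f U1 := hf.mono_set U1_subset
  have i2 : IntegrableOn f U2 := hf.mono_set U2_subset
  have i3 : IntegrableOn f U3 := hf.mono_set U3_subset
  have i4 : IntegrableOn f U4 := hf.mono_set U4_subset
  have i5 : IntegrableOn f U5 := hf.mono_set U5_subset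
  have hae : (refTriangle ×ˢ refTriangle : Set F4) =ᵐ[volume] ((U1 ∪ U2 ∪ U3 ∪ U4 ∪ U5 : Set F4)) := by
    rw [ae_eq_set]
    refine ⟨compl_null, ?_⟩
    have hsub := Set.union_subset (Set.union_subset (Set.union_subset
      (Set.union_subset U1_subset U2_subset) U3_subset) U4_subset) U5_subset
    rw [Set.diff_eq_empty.mpr hsub]
    exact measure_empty
  rw [setIntegral_congr_set hae]
  have d5 : Disjoint (U1 ∪ U2 ∪ U3 ∪ U4) U5 := Set.disjoint_union_left.mpr
    ⟨Set.disjoint_union_left.mpr ⟨Set.disjoint_union_left.mpr ⟨disj15, disj25⟩, disj35⟩, disj45⟩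
  have d4 : Disjoint (U1 ∪ U2 ∪ U3) U4 := Set.disjoint_union_left.mpr
    ⟨Set.disjoint_union_left.mpr ⟨disj14, disj24⟩, disj34⟩
  have d3 : Disjoint (U1 ∪ U2) U3 := Set.disjoint_union_left.mpr ⟨disj13, disj23⟩
  rw [setIntegral_union d5 m5 (((i1.union i2).union i3).union i4) i5,
    setIntegral_union d4 m4 ((i1.union i2).union i3) i4,
    setIntegral_union d3 m3 (i1.union i2) i3,
    setIntegral_union disj12 m2 i1 i2]
end

section
/- Let R > 0, s ∈ (0,1), and x = (x₁, x₂) ∈ ℝ² with |x| < R. Then ∫_{{y ∈ ℝ² : |y| > R}} |x − y|^{-(2+2s)} dy = (1/(2s)) ∫_0^{2π} t(θ, x)^{-2s} dθ, where t(θ, x) := √(μ(θ)² + R² − |x|²) − μ(θ) and μ(θ) := x₁ cos θ + x₂ sin θ. -/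
open MeasureTheory Real

open Set

private noncomputable def eE : EuclideanSpace ℝ (Fin 2) ≃ᵐ ℝ × ℝ :=
  (MeasurableEquiv.toLp 2 (Fin 2 → ℝ)).symm.trans (MeasurableEquiv.finTwoArrow)

private lemma eE_mp : MeasurePreserving eE :=
  (volume_preserving_finTwoArrow ℝ).comp (EuclideanSpace.volume_preserving_symm_measurableEquiv_toLp (Fin 2))

private lemma eE_symm_mp : MeasurePreserving (eE.symm) := MeasurePreserving.symm eE eE_mp

private lemma lintegral_polar (f : ℝ × ℝ → ENNReal) :
    (∫⁻ p in polarCoord.target, ENNReal.ofReal p.1 * f (polarCoord.symm p)) = ∫⁻ p, f p := by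
  set B : ℝ × ℝ → ℝ × ℝ →L[ℝ] ℝ × ℝ := fun p =>
    LinearMap.toContinuousLinearMap (Matrix.toLin (Module.Basis.finTwoProd ℝ) (Module.Basis.finTwoProd ℝ)
      !![Real.cos p.2, -p.1 * Real.sin p.2; Real.sin p.2, p.1 * Real.cos p.2])
  have A : ∀ p ∈ polarCoord.symm.source, HasFDerivWithinAt polarCoord.symm (B p)
      polarCoord.symm.source p :=
    fun p _ => (hasFDerivAt_polarCoord_symm p).hasFDerivWithinAt
  have B_det : ∀ p, (B p).det = p.1 := by
    intro p
    conv_rhs => rw [← one_mul p.1, ← Real.cos_sq_add_sin_sq p.2]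
    simp only [B, neg_mul, LinearMap.det_toContinuousLinearMap, LinearMap.det_toLin,
      Matrix.det_fin_two_of, sub_neg_eq_add]
    ring
  symm
  calc
    ∫⁻ p, f p = ∫⁻ p in polarCoord.source, f p := by
      rw [← setLIntegral_univ]
      exact (setLIntegral_congr polarCoord_source_ae_eq_univ).symm
    _ = ∫⁻ p in polarCoord.target, ENNReal.ofReal |(B p).det| * f (polarCoord.symm p) := by
      have h := lintegral_image_eq_lintegral_abs_det_fderiv_mul volume
        polarCoord.open_target.measurableSet A polarCoord.symm.injOn f
      rw [polarCoord.symm_image_target_eq_source] at h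
      exact h
    _ = ∫⁻ p in polarCoord.target, ENNReal.ofReal p.1 * f (polarCoord.symm p) := by
      refine setLIntegral_congr_fun_ae polarCoord.open_target.measurableSet
        (Filter.Eventually.of_forall fun p hp => ?_)
      rw [B_det, abs_of_pos hp.1]

private lemma Tpos (R x0 x1 : ℝ) (hc : x0^2 + x1^2 < R^2) (θ : ℝ) :
    0 < Real.sqrt ((x0 * Real.cos θ + x1 * Real.sin θ)^2 + R^2 - (x0^2 + x1^2))
        - (x0 * Real.cos θ + x1 * Real.sin θ) := by
  set a : ℝ := x0 * Real.cos θ + x1 * Real.sin θ with ha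
  have habs : |a| < Real.sqrt (a^2 + R^2 - (x0^2 + x1^2)) := by
    rw [← Real.sqrt_sq_eq_abs]
    exact Real.sqrt_lt_sqrt (sq_nonneg a) (by nlinarith)
  have := le_abs_self a
  linarith

private lemma inner_calc (R s x0 x1 : ℝ) (hs : 0 < s)
    (hc : x0^2 + x1^2 < R^2) (θ : ℝ) :
    (∫⁻ r in Ioi (0:ℝ), ENNReal.ofReal r * ENNReal.ofReal
      (if R^2 < (x0 + r * Real.cos θ)^2 + (x1 + r * Real.sin θ)^2
        then ((r * Real.cos θ)^2 + (r * Real.sin θ)^2) ^ (-(1+s)) else 0))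
      = ENNReal.ofReal ((Real.sqrt ((x0 * Real.cos θ + x1 * Real.sin θ)^2 + R^2 - (x0^2 + x1^2))
          - (x0 * Real.cos θ + x1 * Real.sin θ)) ^ (-(2*s)) / (2*s)) := by
  set a : ℝ := x0 * Real.cos θ + x1 * Real.sin θ with ha
  set q : ℝ := a^2 + R^2 - (x0^2 + x1^2) with hqdef
  have hq0 : 0 < q := by nlinarith [sq_nonneg a]
  have hsq : Real.sqrt q ^ 2 = q := Real.sq_sqrt hq0.le
  have habs : |a| < Real.sqrt q := by
    rw [← Real.sqrt_sq_eq_abs]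
    exact Real.sqrt_lt_sqrt (sq_nonneg a) (by nlinarith)
  set T : ℝ := Real.sqrt q - a with hTdef
  have hT : 0 < T := by
    have := le_abs_self a; simp only [hTdef]; linarith
  have hTsum : 0 < Real.sqrt q + a := by
    have := neg_abs_le a; linarith
  have key : (∫⁻ r in Ioi (0:ℝ), ENNReal.ofReal r * ENNReal.ofReal
      (if R^2 < (x0 + r * Real.cos θ)^2 + (x1 + r * Real.sin θ)^2
        then ((r * Real.cos θ)^2 + (r * Real.sin θ)^2) ^ (-(1+s)) else 0))
      = ∫⁻ r in Ioi (0:ℝ), (Ioi T).indicator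
          (fun r => ENNReal.ofReal (r ^ (-(1+2*s)))) r := by
    refine setLIntegral_congr_fun_ae measurableSet_Ioi (Filter.Eventually.of_forall
      fun r hr => ?_)
    have hr : (0:ℝ) < r := hr
    have hcond : (R^2 < (x0 + r * Real.cos θ)^2 + (x1 + r * Real.sin θ)^2) ↔ T < r := by
      have hexp : (x0 + r * Real.cos θ)^2 + (x1 + r * Real.sin θ)^2
          = x0^2 + x1^2 + 2*r*a + r^2 := by
        rw [ha]; linear_combination (r^2) * (Real.sin_sq_add_cos_sq θ)
      rw [hexp]
      constructor
      · intro h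
        by_contra hle
        push_neg at hle
        have h1 : (0:ℝ) ≤ (T - r) * (r + (Real.sqrt q + a)) :=
          mul_nonneg (by linarith) (by linarith)
        simp only [hTdef] at h1
        nlinarith
      · intro h
        have h1 : (0:ℝ) < (r - T) * (r + (Real.sqrt q + a)) :=
          mul_pos (by linarith) (by linarith)
        simp only [hTdef] at h1
        nlinarith
    rcases lt_or_ge T r with hTr | hTr
    · rw [if_pos (hcond.2 hTr), Set.indicator_of_mem (by exact hTr)]
      rw [← ENNReal.ofReal_mul hr.le]
      congr 1
      rw [show (r * Real.cos θ)^2 + (r * Real.sin θ)^2 = r^2 by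
        linear_combination (r^2) * (Real.sin_sq_add_cos_sq θ)]
      rw [← Real.rpow_natCast r 2, ← Real.rpow_mul hr.le,
        show r * r ^ (((2:ℕ):ℝ) * -(1+s)) = r ^ (1:ℝ) * r ^ (((2:ℕ):ℝ) * -(1+s)) by
          rw [Real.rpow_one],
        ← Real.rpow_add hr]
      congr 1
      push_cast; ring
    · rw [if_neg (fun h => absurd (hcond.1 h) (not_lt.2 hTr)),
        Set.indicator_of_notMem (by simpa using hTr)]
      simp
  rw [key, lintegral_indicator measurableSet_Ioi,
    Measure.restrict_restrict measurableSet_Ioi,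
    Set.Ioi_inter_Ioi, sup_eq_left.2 hT.le]
  rw [← ofReal_integral_eq_lintegral_ofReal
    (integrableOn_Ioi_rpow_of_lt (by linarith) hT)
    ((ae_restrict_iff' measurableSet_Ioi).2 (Filter.Eventually.of_forall
      fun r hr => Real.rpow_nonneg (le_of_lt (hT.trans hr)) _))]
  rw [integral_Ioi_rpow_of_lt (by linarith) hT]
  congr 1
  rw [show (-(1+2*s) + 1 : ℝ) = -(2*s) by ring, neg_div_neg_eq]

private lemma step2 (R : ℝ) (hR : 0 < R) (s : ℝ) (hs : 0 < s)
    (x0 x1 : ℝ) (hc : x0^2 + x1^2 < R^2) :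
    (∫ q : ℝ × ℝ, (fun q : ℝ × ℝ =>
        if R^2 < (x0 + q.1)^2 + (x1 + q.2)^2 then (q.1^2 + q.2^2) ^ (-(1+s)) else 0) q)
    = (1 / (2 * s)) * ∫ θ in (0:ℝ)..(2*π),
        (Real.sqrt ((x0 * Real.cos θ + x1 * Real.sin θ)^2 + R^2 - (x0^2 + x1^2))
          - (x0 * Real.cos θ + x1 * Real.sin θ)) ^ (-(2*s)) := by
  have hGm : Measurable (fun q : ℝ × ℝ =>
      if R^2 < (x0 + q.1)^2 + (x1 + q.2)^2 then (q.1^2 + q.2^2) ^ (-(1+s)) else 0) := by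
    apply Measurable.ite (measurableSet_lt measurable_const (by fun_prop)) _ measurable_const
    fun_prop
  have hGnn : ∀ q : ℝ × ℝ, 0 ≤ (fun q : ℝ × ℝ =>
      if R^2 < (x0 + q.1)^2 + (x1 + q.2)^2 then (q.1^2 + q.2^2) ^ (-(1+s)) else 0) q := by
    intro q
    dsimp only
    split_ifs
    · positivity
    · exact le_refl _
  rw [integral_eq_lintegral_of_nonneg_ae (Filter.Eventually.of_forall hGnn)
    hGm.aestronglyMeasurable]
  rw [← lintegral_polar]
  simp only [polarCoord_symm_apply, polarCoord_target]
  have hprod : (volume : Measure (ℝ × ℝ)).restrict ((Ioi (0:ℝ)) ×ˢ Ioo (-π) π)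
      = (volume.restrict (Ioi (0:ℝ))).prod (volume.restrict (Ioo (-π) π)) := by
    rw [Measure.prod_restrict]; rfl
  rw [hprod]
  have hmap : Measurable (fun p : ℝ × ℝ => ((p.1 * Real.cos p.2, p.1 * Real.sin p.2) : ℝ × ℝ)) := by
    fun_prop
  have hfm : Measurable (fun p : ℝ × ℝ => ENNReal.ofReal p.1 * ENNReal.ofReal
      (if R^2 < (x0 + p.1 * Real.cos p.2)^2 + (x1 + p.1 * Real.sin p.2)^2
        then ((p.1 * Real.cos p.2)^2 + (p.1 * Real.sin p.2)^2) ^ (-(1+s)) else 0)) :=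
    (measurable_fst.ennreal_ofReal).mul ((hGm.comp hmap).ennreal_ofReal)
  rw [lintegral_prod_symm _ hfm.aemeasurable]
  have h6 : (∫⁻ θ in Ioo (-π) π, ∫⁻ r in Ioi (0:ℝ), ENNReal.ofReal r * ENNReal.ofReal
      (if R^2 < (x0 + r * Real.cos θ)^2 + (x1 + r * Real.sin θ)^2
        then ((r * Real.cos θ)^2 + (r * Real.sin θ)^2) ^ (-(1+s)) else 0))
      = ∫⁻ θ in Ioo (-π) π, ENNReal.ofReal
          ((Real.sqrt ((x0 * Real.cos θ + x1 * Real.sin θ)^2 + R^2 - (x0^2 + x1^2))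
            - (x0 * Real.cos θ + x1 * Real.sin θ)) ^ (-(2*s)) / (2*s)) :=
    lintegral_congr fun θ => inner_calc R s x0 x1 hs hc θ
  rw [h6]
  set g : ℝ → ℝ := fun θ =>
    (Real.sqrt ((x0 * Real.cos θ + x1 * Real.sin θ)^2 + R^2 - (x0^2 + x1^2))
      - (x0 * Real.cos θ + x1 * Real.sin θ)) ^ (-(2*s)) / (2*s) with hg
  have hTpos : ∀ θ : ℝ, 0 < Real.sqrt ((x0 * Real.cos θ + x1 * Real.sin θ)^2 + R^2 - (x0^2 + x1^2))
      - (x0 * Real.cos θ + x1 * Real.sin θ) := Tpos R x0 x1 hc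
  have hgnn : ∀ θ, 0 ≤ g θ := fun θ =>
    div_nonneg (Real.rpow_nonneg (hTpos θ).le _) (by positivity)
  have hTcont : Continuous (fun θ : ℝ =>
      Real.sqrt ((x0 * Real.cos θ + x1 * Real.sin θ)^2 + R^2 - (x0^2 + x1^2))
        - (x0 * Real.cos θ + x1 * Real.sin θ)) := by
    apply Continuous.sub
    · exact Real.continuous_sqrt.comp (by fun_prop)
    · fun_prop
  have hgcont : Continuous g :=
    (hTcont.rpow_const fun θ => Or.inl (hTpos θ).ne').div_const _
  have hgint : IntegrableOn g (Ioo (-π) π) :=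
    (hgcont.integrableOn_Icc).mono_set Ioo_subset_Icc_self
  rw [← ofReal_integral_eq_lintegral_ofReal hgint
    (Filter.Eventually.of_forall fun θ => hgnn θ)]
  rw [ENNReal.toReal_ofReal (setIntegral_nonneg measurableSet_Ioo fun θ _ => hgnn θ)]
  have hper : Function.Periodic g (2*π) := by
    intro θ
    simp only [hg, Real.cos_add_two_pi, Real.sin_add_two_pi]
  calc
    ∫ θ in Ioo (-π) π, g θ = ∫ θ in Ioc (-π) π, g θ := integral_Ioc_eq_integral_Ioo.symm
    _ = ∫ θ in (-π)..π, g θ :=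
      (intervalIntegral.integral_of_le (by linarith [Real.pi_pos])).symm
    _ = ∫ θ in (-π)..(-π + 2*π), g θ := by congr 1; ring
    _ = ∫ θ in (0:ℝ)..(0 + 2*π), g θ := hper.intervalIntegral_add_eq (-π) 0
    _ = ∫ θ in (0:ℝ)..(2*π), g θ := by rw [zero_add]
    _ = 1 / (2 * s) * ∫ θ in (0:ℝ)..(2*π),
        (Real.sqrt ((x0 * Real.cos θ + x1 * Real.sin θ)^2 + R^2 - (x0^2 + x1^2))
          - (x0 * Real.cos θ + x1 * Real.sin θ)) ^ (-(2*s)) := by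
      simp only [hg]
      rw [intervalIntegral.integral_div]
      ring

private lemma step1 (R : ℝ) (hR : 0 < R) (s : ℝ)
    (x : EuclideanSpace ℝ (Fin 2))
    (hnorm2 : ∀ v : EuclideanSpace ℝ (Fin 2), ‖v‖^2 = (v 0)^2 + (v 1)^2) :
    (∫ y in {y : EuclideanSpace ℝ (Fin 2) | R < ‖y‖}, ‖x - y‖ ^ (-(2 + 2 * s)))
      = ∫ q : ℝ × ℝ, (fun q : ℝ × ℝ =>
          if R^2 < (x 0 + q.1)^2 + (x 1 + q.2)^2 then (q.1^2 + q.2^2) ^ (-(1+s)) else 0) q := by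
  have hrpow : ∀ v : EuclideanSpace ℝ (Fin 2), ‖x - v‖ ^ (-(2 + 2*s))
      = ((x 0 - v 0)^2 + (x 1 - v 1)^2) ^ (-(1+s)) := by
    intro v
    have h2 : ‖x - v‖^2 = (x 0 - v 0)^2 + (x 1 - v 1)^2 := by
      rw [hnorm2]; simp [PiLp.sub_apply]
    rw [← h2, ← Real.rpow_natCast ‖x - v‖ 2, ← Real.rpow_mul (norm_nonneg _)]
    congr 1
    push_cast; ring
  have hset : eE.symm ⁻¹' {y : EuclideanSpace ℝ (Fin 2) | R < ‖y‖}
      = {p : ℝ × ℝ | R^2 < p.1^2 + p.2^2} := by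
    ext p
    simp only [mem_preimage, mem_setOf_eq]
    have h2 : ‖eE.symm p‖^2 = p.1^2 + p.2^2 := hnorm2 (eE.symm p)
    constructor <;> intro h <;> nlinarith [norm_nonneg (eE.symm p), hR]
  have hA2m : MeasurableSet {p : ℝ × ℝ | R^2 < p.1^2 + p.2^2} :=
    measurableSet_lt measurable_const (by fun_prop)
  calc
    (∫ y in {y : EuclideanSpace ℝ (Fin 2) | R < ‖y‖}, ‖x - y‖ ^ (-(2 + 2 * s)))
        = ∫ y in {y : EuclideanSpace ℝ (Fin 2) | R < ‖y‖},
            ((x 0 - y 0)^2 + (x 1 - y 1)^2) ^ (-(1+s)) := by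
      simp only [hrpow]
    _ = ∫ p in eE.symm ⁻¹' {y : EuclideanSpace ℝ (Fin 2) | R < ‖y‖},
          ((x 0 - p.1)^2 + (x 1 - p.2)^2) ^ (-(1+s)) :=
      (eE_symm_mp.setIntegral_preimage_emb eE.symm.measurableEmbedding
        (fun y : EuclideanSpace ℝ (Fin 2) => ((x 0 - y 0)^2 + (x 1 - y 1)^2) ^ (-(1+s))) _).symm
    _ = ∫ p in {p : ℝ × ℝ | R^2 < p.1^2 + p.2^2},
          ((x 0 - p.1)^2 + (x 1 - p.2)^2) ^ (-(1+s)) := by rw [hset]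
    _ = ∫ p, ({p : ℝ × ℝ | R^2 < p.1^2 + p.2^2}).indicator
          (fun p => ((x 0 - p.1)^2 + (x 1 - p.2)^2) ^ (-(1+s))) p := (integral_indicator hA2m).symm
    _ = ∫ q, ({p : ℝ × ℝ | R^2 < p.1^2 + p.2^2}).indicator
          (fun p => ((x 0 - p.1)^2 + (x 1 - p.2)^2) ^ (-(1+s))) (((x 0, x 1) : ℝ × ℝ) + q) :=
      (integral_add_left_eq_self _ _).symm
    _ = ∫ q : ℝ × ℝ, (fun q : ℝ × ℝ =>
          if R^2 < (x 0 + q.1)^2 + (x 1 + q.2)^2 then (q.1^2 + q.2^2) ^ (-(1+s)) else 0) q := by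
      congr 1
      funext q
      rw [Set.indicator_apply]
      simp only [mem_setOf_eq, Prod.fst_add, Prod.snd_add]
      rw [show ((x 0, x 1) : ℝ × ℝ).1 + q.1 = x 0 + q.1 from rfl,
        show ((x 0, x 1) : ℝ × ℝ).2 + q.2 = x 1 + q.2 from rfl,
        show (x 0 - (x 0 + q.1))^2 + (x 1 - (x 1 + q.2))^2 = q.1^2 + q.2^2 by ring]

/-- Polar-coordinate formula for the exterior density of the integral fractional
Laplacian in 2D: for `|x| < R`,
`∫_{|y|>R} |x−y|^{-(2+2s)} dy = (1/(2s)) ∫_0^{2π} t(θ,x)^{-2s} dθ`, where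
`t(θ,x) = √(μ² + R² − |x|²) − μ` and `μ = x₁ cos θ + x₂ sin θ`. -/
theorem exterior_density_polar_formula
    (R : ℝ) (hR : 0 < R) (s : ℝ) (hs : 0 < s) (hs1 : s < 1)
    (x : EuclideanSpace ℝ (Fin 2)) (hx : ‖x‖ < R) :
    (∫ y in {y : EuclideanSpace ℝ (Fin 2) | R < ‖y‖}, ‖x - y‖ ^ (-(2 + 2 * s)))
      = (1 / (2 * s)) *
        ∫ θ in (0 : ℝ)..(2 * π),
          (Real.sqrt ((x 0 * Real.cos θ + x 1 * Real.sin θ) ^ 2 + R ^ 2 - ‖x‖ ^ 2)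
            - (x 0 * Real.cos θ + x 1 * Real.sin θ)) ^ (-(2 * s)) := by
  have hnorm2 : ∀ v : EuclideanSpace ℝ (Fin 2), ‖v‖^2 = (v 0)^2 + (v 1)^2 := by
    intro v
    rw [EuclideanSpace.norm_eq, Real.sq_sqrt (by positivity)]
    simp [Fin.sum_univ_two, sq_abs]
  have hnx : ‖x‖^2 = (x 0)^2 + (x 1)^2 := hnorm2 x
  have hc : (x 0)^2 + (x 1)^2 < R^2 := by
    rw [← hnx]; nlinarith [norm_nonneg x]
  rw [hnx]
  rw [step1 R hR s x hnorm2]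
  exact step2 R hR s hs (x 0) (x 1) hc
end
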